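/- arXiv:2105.08868 — 4 statements merged into one kernel-verified Lean document; each statement's English description precedes it below -/
import Mathlib

section
/- (Reduced factorization, case m < k < K − m − 1.) Under the mth-order Markov model, for every integer k with m < k < K − m − 1 and all (y,r) ∈ {0,1}^K × {0,1}^K, the joint law factorizes as p(y,r) = f(Ȳ_{k−m}) · f(Ȳᵐₖ | Ȳ_{k−m}) · f(Y̲^{m+1}_{k−1} | Ȳᵐₖ) · f(Y_{k+m+1} | Y̲^{m+1}_{k−1}) · f(Y̲_{k+m+1} | Y̲^{m+2}_{k−1}) · f(R̄_{k−m} | Ȳ_{k−m}, Ōᵐₖ) · f(R̄ᵐₖ | Ȳₖ, O̲^{m+1}_{k−1}) · f(R̲^{m+1}_{k−1} | Ȳ^{2m+1}_{k+m+1}, O̲_{k+m}) · f(R_{k+m+1} | Y̲^{m+2}_{k−1}, O̲_{k+m+1}) · f(R̲_{k+m+1} | Y̲_{k−1}), where each factor is the corresponding conditional pmf of p evaluated at the entries of (y,r) (with all O-values determined by (y,r)), and the blocks are Ȳ_{k−m} = (Y₁,…,Y_{k−m−1}), Ȳᵐₖ = (Y_{k−m},…,Y_{k−1}), Y̲^{m+1}_{k−1}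 = (Y_k,…,Y_{k+m}), Y̲^{m+2}_{k−1} = (Y_k,…,Y_{k+m+1}), Y̲_{k+m+1} = (Y_{k+m+2},…,Y_K), Y̲_{k−1} = (Y_k,…,Y_K), Ȳₖ = (Y₁,…,Y_{k−1}), Ȳ^{2m+1}_{k+m+1} = (Y_{k−m},…,Y_{k+m}), R̄_{k−m} = (R₁,…,R_{k−m−1}), R̄ᵐₖ = (R_{k−m},…,R_{k−1}), R̲^{m+1}_{k−1} = (R_k,…,R_{k+m}), R̲_{k+m+1} = (R_{k+m+2},…,R_K), Ōᵐₖ = (O_{k−m},…,O_{k−1}), O̲^{m+1}_{k−1} = (O_k,…,O_{k+m}), O̲_{k+m} = (O_{k+m+1},…,O_K), O̲_{k+m+1} = (O_{k+m+2},…,O_K). -/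
open scoped Classical BigOperators

namespace MRM

/-- Observed datum at index `j`: `some (y j)` if `r j = true` (observed), otherwise `none`
(missing, i.e. the value `?`). -/
def obs {K : ℕ} (y r : Fin K → Bool) (j : Fin K) : Option Bool :=
  if r j then some (y j) else none

/-- Probability of an event under the joint pmf `p` on outcomes and response indicators. -/
noncomputable def Pr {K : ℕ} (p : (Fin K → Bool) → (Fin K → Bool) → ℝ)
    (E : (Fin K → Bool) → (Fin K → Bool) → Prop) : ℝ :=
  ∑ y : Fin K → Bool, ∑ r : Fin K → Bool, if E y r then p y r else 0

/-- Conditional probability `P(A | C)` under `p`. -/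
noncomputable def cPr {K : ℕ} (p : (Fin K → Bool) → (Fin K → Bool) → ℝ)
    (A C : (Fin K → Bool) → (Fin K → Bool) → Prop) : ℝ :=
  Pr p (fun y r => A y r ∧ C y r) / Pr p C

/-- Event: the outcomes at the 1-based positions `lo ≤ pos ≤ hi` take the values `yv pos`.
(If `hi < lo`, or the window is out of range, this is the trivial event, matching the
convention that a vector whose lower index exceeds its upper index is the null vector.) -/
def Yeq {K : ℕ} (lo hi : ℕ) (yv : ℕ → Bool) :
    (Fin K → Bool) → (Fin K → Bool) → Prop :=
  fun y _ => ∀ j : Fin K, lo ≤ j.1 + 1 → j.1 + 1 ≤ hi → y j = yv (j.1 + 1)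

/-- Event: the response indicators at positions `lo ≤ pos ≤ hi` take the values `rv pos`. -/
def Req {K : ℕ} (lo hi : ℕ) (rv : ℕ → Bool) :
    (Fin K → Bool) → (Fin K → Bool) → Prop :=
  fun _ r => ∀ j : Fin K, lo ≤ j.1 + 1 → j.1 + 1 ≤ hi → r j = rv (j.1 + 1)

/-- Event: the observed data at positions `lo ≤ pos ≤ hi` take the values `ov pos`. -/
def Oeq {K : ℕ} (lo hi : ℕ) (ov : ℕ → Option Bool) :
    (Fin K → Bool) → (Fin K → Bool) → Prop :=
  fun y r => ∀ j : Fin K, lo ≤ j.1 + 1 → j.1 + 1 ≤ hi → obs y r j = ov (j.1 + 1)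

/-- The `m`-th order Markov model:
`p(y, r) = ∏ₖ aₖ(yₖ | ȳᵐₖ) · bₖ(rₖ | ȳᵐₖ, yₖ, o̲ᵐₖ)`, where `aₖ` and `bₖ` are strictly
positive conditional pmfs in their first argument, `aₖ` depends only on the outcomes at
1-based positions `max(1, k − m), …, k`, and `bₖ` depends only on `rₖ`, the outcomes at
positions `max(1, k − m), …, k` and the observed data at positions `k + 1, …, min(k + m, K)`.
Indices of `Fin K` are 0-based, so the 1-based paper position of `k : Fin K` is `k.1 + 1`. -/
structure Markov (K m : ℕ) where
  p : (Fin K → Bool) → (Fin K → Bool) → ℝ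
  a : Fin K → (Fin K → Bool) → ℝ
  b : Fin K → (Fin K → Bool) → (Fin K → Bool) → ℝ
  a_pos : ∀ k y, 0 < a k y
  b_pos : ∀ k y r, 0 < b k y r
  a_pmf : ∀ (k : Fin K) (y : Fin K → Bool), ∑ v : Bool, a k (Function.update y k v) = 1
  b_pmf : ∀ (k : Fin K) (y r : Fin K → Bool), ∑ v : Bool, b k y (Function.update r k v) = 1
  a_local : ∀ (k : Fin K) (y y' : Fin K → Bool),
    (∀ j : Fin K, k.1 + 1 - m ≤ j.1 + 1 → j.1 ≤ k.1 → y j = y' j) → a k y = a k y'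
  b_local : ∀ (k : Fin K) (y r y' r' : Fin K → Bool), r k = r' k →
    (∀ j : Fin K, k.1 + 1 - m ≤ j.1 + 1 → j.1 ≤ k.1 → y j = y' j) →
    (∀ j : Fin K, k.1 < j.1 → j.1 + 1 ≤ k.1 + 1 + m → obs y r j = obs y' r' j) →
    b k y r = b k y' r'
  factor : ∀ y r, p y r = ∏ k : Fin K, a k y * b k y r
  sum_one : ∑ y : Fin K → Bool, ∑ r : Fin K → Bool, p y r = 1

/-- Real value of a binary outcome. -/
def yVal (v : Bool) : ℝ := if v then 1 else 0

/-- `cₖ(ȳᵐₖ, o̲ᵐₖ; α) = E[exp(α Yₖ) | Rₖ = 1, Ȳᵐₖ = ȳᵐₖ, O̲ᵐₖ = o̲ᵐₖ]` (`k` is 1-based). -/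
noncomputable def cfun {K : ℕ} (p : (Fin K → Bool) → (Fin K → Bool) → ℝ) (m : ℕ) (α : ℝ)
    (k : ℕ) (yv : ℕ → Bool) (ov : ℕ → Option Bool) : ℝ :=
  ∑ v : Bool, Real.exp (α * yVal v) *
    cPr p (Yeq k k (fun _ => v))
      (fun y r => Req k k (fun _ => true) y r ∧ Yeq (k - m) (k - 1) yv y r ∧
        Oeq (k + 1) (k + m) ov y r)

/-- The exponential tilting restriction with sensitivity parameters `α k` (`k` is 1-based):
`f(Yₖ | Rₖ = 0, Ȳᵐₖ, O̲ᵐₖ) = f(Yₖ | Rₖ = 1, Ȳᵐₖ, O̲ᵐₖ) · exp(αₖ Yₖ) / cₖ(Ȳᵐₖ, O̲ᵐₖ; αₖ)`. -/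
def Tilt {K : ℕ} (p : (Fin K → Bool) → (Fin K → Bool) → ℝ) (m : ℕ) (α : ℕ → ℝ) : Prop :=
  ∀ (k : ℕ), 1 ≤ k → k ≤ K → ∀ (yv : ℕ → Bool) (ov : ℕ → Option Bool),
    cPr p (Yeq k k yv)
      (fun y r => Req k k (fun _ => false) y r ∧ Yeq (k - m) (k - 1) yv y r ∧
        Oeq (k + 1) (k + m) ov y r)
    = cPr p (Yeq k k yv)
        (fun y r => Req k k (fun _ => true) y r ∧ Yeq (k - m) (k - 1) yv y r ∧
          Oeq (k + 1) (k + m) ov y r)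
      * Real.exp (α k * yVal (yv k)) / cfun p m (α k) k yv ov

section Aux

variable {K m : ℕ}

private lemma sum_update_bool (j0 : Fin K) (c : Bool) (g : (Fin K → Bool) → ℝ) :
    ∑ r : Fin K → Bool, g r
      = ∑ r : Fin K → Bool,
          if r j0 = c then ∑ v : Bool, g (Function.update r j0 v) else 0 := by
  have key : ∀ v : Bool,
      (∑ r : Fin K → Bool, if r j0 = c then g (Function.update r j0 v) else 0)
        = ∑ r : Fin K → Bool, if r j0 = v then g r else 0 := by
    intro v
    rw [← Finset.sum_filter, ← Finset.sum_filter]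
    refine Finset.sum_nbij' (i := fun r => Function.update r j0 v)
      (j := fun r => Function.update r j0 c) ?_ ?_ ?_ ?_ ?_
    · intro r hr; simp
    · intro r hr; simp
    · intro r hr
      simp only [Finset.mem_filter, Finset.mem_univ, true_and] at hr
      show Function.update (Function.update r j0 v) j0 c = r
      rw [Function.update_idem, ← hr, Function.update_eq_self]
    · intro r hr
      simp only [Finset.mem_filter, Finset.mem_univ, true_and] at hr
      show Function.update (Function.update r j0 c) j0 v = r
      rw [Function.update_idem, ← hr, Function.update_eq_self]
    · intro r _; rfl
  calc ∑ r : Fin K → Bool, g r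
      = ∑ r : Fin K → Bool, ∑ v : Bool, if r j0 = v then g r else 0 := by
        refine Finset.sum_congr rfl fun r _ => ?_
        rw [Fintype.sum_ite_eq (r j0) (fun _ => g r)]
    _ = ∑ v : Bool, ∑ r : Fin K → Bool, if r j0 = v then g r else 0 := Finset.sum_comm
    _ = ∑ v : Bool, ∑ r : Fin K → Bool,
          if r j0 = c then g (Function.update r j0 v) else 0 := by
        exact (Finset.sum_congr rfl fun v _ => (key v)).symm
    _ = ∑ r : Fin K → Bool, ∑ v : Bool,
          if r j0 = c then g (Function.update r j0 v) else 0 := Finset.sum_comm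
    _ = ∑ r : Fin K → Bool,
          if r j0 = c then ∑ v : Bool, g (Function.update r j0 v) else 0 := by
        refine Finset.sum_congr rfl fun r _ => ?_
        by_cases h : r j0 = c <;> simp [h]

/-- Interval of 1-based positions `lo ≤ pos ≤ hi` as a finset of indices. -/
def Iv (K : ℕ) (lo hi : ℕ) : Finset (Fin K) :=
  Finset.univ.filter fun j => lo ≤ j.1 + 1 ∧ j.1 + 1 ≤ hi

lemma mem_Iv {K lo hi : ℕ} {j : Fin K} : j ∈ Iv K lo hi ↔ lo ≤ j.1 + 1 ∧ j.1 + 1 ≤ hi := by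
  simp [Iv]

variable (M : Markov K m) (ys rs : Fin K → Bool)

/-- Master marginal-sum quantity. -/
noncomputable def G (Sy Sr Ja Jb : Finset (Fin K)) : ℝ :=
  ∑ y : Fin K → Bool, ∑ r : Fin K → Bool,
    if (∀ j, j ∉ Sy → y j = ys j) ∧ (∀ j, j ∉ Sr → r j = rs j) then
      (∏ j ∈ Ja, M.a j y) * ∏ j ∈ Jb, M.b j y r
    else 0

lemma p_pos (y r : Fin K → Bool) : 0 < M.p y r := by
  rw [M.factor]
  exact Finset.prod_pos fun j _ => mul_pos (M.a_pos j y) (M.b_pos j y r)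

lemma Pr_pos (E : (Fin K → Bool) → (Fin K → Bool) → Prop) (y0 r0 : Fin K → Bool)
    (h : E y0 r0) : 0 < Pr M.p E := by
  unfold Pr
  refine Finset.sum_pos' (fun y _ => Finset.sum_nonneg fun r _ => ?_)
    ⟨y0, Finset.mem_univ _, ?_⟩
  · by_cases hE : E y r
    · rw [if_pos hE]; exact (p_pos M _ _).le
    · rw [if_neg hE]
  · refine Finset.sum_pos' (fun r _ => ?_) ⟨r0, Finset.mem_univ _, ?_⟩
    · by_cases hE : E y0 r
      · rw [if_pos hE]; exact (p_pos M _ _).le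
      · rw [if_neg hE]
    · rw [if_pos h]; exact p_pos M _ _

lemma Pr_eq_G (E : (Fin K → Bool) → (Fin K → Bool) → Prop) (Sy Sr : Finset (Fin K))
    (hE : ∀ y r, E y r ↔ ((∀ j, j ∉ Sy → y j = ys j) ∧ (∀ j, j ∉ Sr → r j = rs j))) :
    Pr M.p E = G M ys rs Sy Sr Finset.univ Finset.univ := by
  unfold Pr G
  refine Finset.sum_congr rfl fun y _ => Finset.sum_congr rfl fun r _ => ?_
  by_cases h : E y r
  · rw [if_pos h, if_pos ((hE y r).mp h), M.factor, Finset.prod_mul_distrib]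
  · rw [if_neg h, if_neg fun hc => h ((hE y r).mpr hc)]

lemma peelR (Sy Sr Ja Jb : Finset (Fin K)) (j0 : Fin K) (hS : j0 ∈ Sr) (hJ : j0 ∈ Jb)
    (hmin : ∀ j ∈ Jb, j ≠ j0 → j0 < j) :
    G M ys rs Sy Sr Ja Jb = G M ys rs Sy (Sr.erase j0) Ja (Jb.erase j0) := by
  unfold G
  refine Finset.sum_congr rfl fun y _ => ?_
  by_cases hCy : ∀ j, j ∉ Sy → y j = ys j
  case neg => simp [hCy]
  rw [sum_update_bool j0 (rs j0)
    (fun r => if (∀ j, j ∉ Sy → y j = ys j) ∧ (∀ j, j ∉ Sr → r j = rs j) then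
      (∏ j ∈ Ja, M.a j y) * ∏ j ∈ Jb, M.b j y r else 0)]
  refine Finset.sum_congr rfl fun r _ => ?_
  by_cases h0 : r j0 = rs j0
  case neg =>
    rw [if_neg h0]
    refine (if_neg ?_).symm
    rintro ⟨-, hCr⟩
    exact h0 (hCr j0 (Finset.notMem_erase j0 Sr))
  rw [if_pos h0]
  have hQ : ∀ v : Bool, (∀ j, j ∉ Sr → Function.update r j0 v j = rs j) ↔
      (∀ j, j ∉ Sr → r j = rs j) := by
    intro v
    constructor <;> intro h j hj
    · have := h j hj
      rwa [Function.update_of_ne (fun he => hj (by rw [he]; exact hS)) _ _] at this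
    · rw [Function.update_of_ne (fun he => hj (by rw [he]; exact hS)) _ _]
      exact h j hj
  have hQ' : (∀ j, j ∉ Sr.erase j0 → r j = rs j) ↔ (∀ j, j ∉ Sr → r j = rs j) := by
    constructor <;> intro h j hj
    · exact h j fun hc => hj (Finset.mem_of_mem_erase hc)
    · by_cases he : j = j0
      · exact he ▸ h0
      · exact h j fun hc => hj (Finset.mem_erase.mpr ⟨he, hc⟩)
  by_cases hCr : ∀ j, j ∉ Sr → r j = rs j
  · have hterm : ∀ v : Bool,
        (if (∀ j, j ∉ Sy → y j = ys j) ∧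
            (∀ j, j ∉ Sr → Function.update r j0 v j = rs j) then
          (∏ j ∈ Ja, M.a j y) * ∏ j ∈ Jb, M.b j y (Function.update r j0 v) else 0)
        = ((∏ j ∈ Ja, M.a j y) * ∏ j ∈ Jb.erase j0, M.b j y r)
            * M.b j0 y (Function.update r j0 v) := by
      intro v
      rw [if_pos ⟨hCy, (hQ v).mpr hCr⟩]
      rw [← Finset.mul_prod_erase _ _ hJ]
      have hprod : ∏ j ∈ Jb.erase j0, M.b j y (Function.update r j0 v)
          = ∏ j ∈ Jb.erase j0, M.b j y r := by
        refine Finset.prod_congr rfl fun j hj => ?_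
        have hjj : j ≠ j0 := (Finset.mem_erase.mp hj).1
        have hlt := Fin.lt_def.mp (hmin j (Finset.mem_of_mem_erase hj) hjj)
        refine M.b_local j y (Function.update r j0 v) y r ?_ (fun i _ _ => rfl) ?_
        · exact Function.update_of_ne hjj _ _
        · intro i hi1 _
          have hij : i ≠ j0 := by
            intro he; subst he; omega
          unfold obs
          rw [Function.update_of_ne hij _ _]
      rw [hprod]; ring
    rw [Finset.sum_congr rfl fun v _ => hterm v, ← Finset.mul_sum, M.b_pmf j0 y r, mul_one,
      if_pos ⟨hCy, hQ'.mpr hCr⟩]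
  · have h1 : ¬ ((∀ j, j ∉ Sy → y j = ys j) ∧ (∀ j, j ∉ Sr.erase j0 → r j = rs j)) := by
      rintro ⟨-, h⟩; exact hCr (hQ'.mp h)
    rw [if_neg h1]
    refine Finset.sum_eq_zero fun v _ => ?_
    rw [if_neg]
    rintro ⟨-, h⟩; exact hCr ((hQ v).mp h)

lemma G_noR (Sy Ja : Finset (Fin K)) :
    G M ys rs Sy ∅ Ja ∅
      = ∑ y : Fin K → Bool,
          if (∀ j, j ∉ Sy → y j = ys j) then ∏ j ∈ Ja, M.a j y else 0 := by
  unfold G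
  refine Finset.sum_congr rfl fun y _ => ?_
  have h1 : ∀ r : Fin K → Bool,
      ((∀ j : Fin K, j ∉ (∅ : Finset (Fin K)) → r j = rs j) ↔ r = rs) := by
    intro r; simp [funext_iff]
  by_cases hCy : ∀ j, j ∉ Sy → y j = ys j
  · simp only [Finset.prod_empty, mul_one, h1, and_iff_right hCy, if_pos hCy]
    rw [Finset.sum_ite_eq' Finset.univ rs (fun _ => ∏ j ∈ Ja, M.a j y)]
    simp
  · simp [hCy]

lemma peelA (Sy Ja : Finset (Fin K)) (j0 : Fin K) (hS : j0 ∈ Sy) (hJ : j0 ∈ Ja)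
    (hmax : ∀ j ∈ Ja, j ≠ j0 → j < j0) :
    G M ys rs Sy ∅ Ja ∅ = G M ys rs (Sy.erase j0) ∅ (Ja.erase j0) ∅ := by
  rw [G_noR, G_noR]
  rw [sum_update_bool j0 (ys j0)
    (fun y => if (∀ j, j ∉ Sy → y j = ys j) then ∏ j ∈ Ja, M.a j y else 0)]
  refine Finset.sum_congr rfl fun y _ => ?_
  by_cases h0 : y j0 = ys j0
  case neg =>
    rw [if_neg h0]
    refine (if_neg ?_).symm
    intro hC; exact h0 (hC j0 (Finset.notMem_erase j0 Sy))
  rw [if_pos h0]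
  have hQ : ∀ v : Bool, (∀ j, j ∉ Sy → Function.update y j0 v j = ys j) ↔
      (∀ j, j ∉ Sy → y j = ys j) := by
    intro v
    constructor <;> intro h j hj
    · have := h j hj
      rwa [Function.update_of_ne (fun he => hj (by rw [he]; exact hS)) _ _] at this
    · rw [Function.update_of_ne (fun he => hj (by rw [he]; exact hS)) _ _]
      exact h j hj
  have hQ' : (∀ j, j ∉ Sy.erase j0 → y j = ys j) ↔ (∀ j, j ∉ Sy → y j = ys j) := by
    constructor <;> intro h j hj
    · exact h j fun hc => hj (Finset.mem_of_mem_erase hc)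
    · by_cases he : j = j0
      · exact he ▸ h0
      · exact h j fun hc => hj (Finset.mem_erase.mpr ⟨he, hc⟩)
  by_cases hCy : ∀ j, j ∉ Sy → y j = ys j
  · have hterm : ∀ v : Bool,
        (if (∀ j, j ∉ Sy → Function.update y j0 v j = ys j) then
          ∏ j ∈ Ja, M.a j (Function.update y j0 v) else 0)
        = (∏ j ∈ Ja.erase j0, M.a j y) * M.a j0 (Function.update y j0 v) := by
      intro v
      rw [if_pos ((hQ v).mpr hCy)]
      rw [← Finset.mul_prod_erase _ _ hJ]
      have hprod : ∏ j ∈ Ja.erase j0, M.a j (Function.update y j0 v)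
          = ∏ j ∈ Ja.erase j0, M.a j y := by
        refine Finset.prod_congr rfl fun j hj => ?_
        have hjj : j ≠ j0 := (Finset.mem_erase.mp hj).1
        have hlt := Fin.lt_def.mp (hmax j (Finset.mem_of_mem_erase hj) hjj)
        refine M.a_local j (Function.update y j0 v) y ?_
        intro i _ hi2
        refine Function.update_of_ne ?_ _ _
        intro he; subst he; omega
      rw [hprod]; ring
    rw [Finset.sum_congr rfl fun v _ => hterm v, ← Finset.mul_sum, M.a_pmf j0 y, mul_one,
      if_pos (hQ'.mpr hCy)]
  · have h1 : ¬ (∀ j, j ∉ Sy.erase j0 → y j = ys j) := fun h => hCy (hQ'.mp h)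
    rw [if_neg h1]
    refine Finset.sum_eq_zero fun v _ => ?_
    rw [if_neg]
    intro h; exact hCy ((hQ v).mp h)
lemma peelR_range (Sy Ja Sr0 Jb0 : Finset (Fin K)) (t : ℕ) (ht : t ≤ K)
    (hSr0 : ∀ j ∈ Sr0, t < j.1 + 1) (hJb0 : ∀ j ∈ Jb0, t < j.1 + 1) :
    ∀ n s, 1 ≤ s → t + 1 - s = n →
      G M ys rs Sy (Sr0 ∪ Iv K s t) Ja (Jb0 ∪ Iv K s t) = G M ys rs Sy Sr0 Ja Jb0 := by
  intro n
  induction n with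
  | zero =>
    intro s hs1 hs
    have hIv : Iv K s t = ∅ := by
      ext j; simp only [mem_Iv, Finset.notMem_empty, iff_false]; omega
    simp [hIv]
  | succ n ih =>
    intro s hs1 hs
    have hst : s ≤ t := by omega
    have hsK : s - 1 < K := by omega
    set j0 : Fin K := ⟨s - 1, hsK⟩ with hj0
    have hj0v : j0.1 + 1 = s := by simp only [hj0]; omega
    have hmemIv : j0 ∈ Iv K s t := mem_Iv.mpr (by omega)
    have hj0Sr0 : j0 ∉ Sr0 := fun h => by have := hSr0 j0 h; omega
    have hj0Jb0 : j0 ∉ Jb0 := fun h => by have := hJb0 j0 h; omega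
    have heq : ∀ A : Finset (Fin K), j0 ∉ A →
        (A ∪ Iv K s t).erase j0 = A ∪ Iv K (s + 1) t := by
      intro A hA
      ext j
      simp only [Finset.mem_erase, Finset.mem_union, mem_Iv]
      constructor
      · rintro ⟨hne, h | h⟩
        · exact Or.inl h
        · right
          have hjs : j.1 + 1 ≠ s := by
            intro hc; exact hne (Fin.ext (by omega))
          omega
      · rintro (h | h)
        · exact ⟨fun he => hA (by rw [← he]; exact h), Or.inl h⟩
        · refine ⟨?_, Or.inr (by omega)⟩
          intro he
          have hv : j.1 + 1 = s := by rw [he]; exact hj0v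
          omega
    have hmin : ∀ j ∈ Jb0 ∪ Iv K s t, j ≠ j0 → j0 < j := by
      intro j hj hne
      rcases Finset.mem_union.mp hj with h | h
      · have := hJb0 j h; exact Fin.lt_def.mpr (by omega)
      · have h2 := mem_Iv.mp h
        have hjs : j.1 + 1 ≠ s := fun hc => hne (Fin.ext (by omega))
        exact Fin.lt_def.mpr (by omega)
    rw [peelR M ys rs Sy _ Ja _ j0 (Finset.mem_union_right _ hmemIv)
        (Finset.mem_union_right _ hmemIv) hmin, heq Sr0 hj0Sr0, heq Jb0 hj0Jb0]
    exact ih (s + 1) (by omega) (by omega)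

lemma peelA_range (Sy0 Ja0 : Finset (Fin K)) (s : ℕ) (hs1 : 1 ≤ s)
    (hSy0 : ∀ j ∈ Sy0, j.1 + 1 < s) (hJa0 : ∀ j ∈ Ja0, j.1 + 1 < s) :
    ∀ n t, t ≤ K → t + 1 - s = n →
      G M ys rs (Sy0 ∪ Iv K s t) ∅ (Ja0 ∪ Iv K s t) ∅ = G M ys rs Sy0 ∅ Ja0 ∅ := by
  intro n
  induction n with
  | zero =>
    intro t htK ht
    have hIv : Iv K s t = ∅ := by
      ext j; simp only [mem_Iv, Finset.notMem_empty, iff_false]; omega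
    simp [hIv]
  | succ n ih =>
    intro t htK ht
    have hst : s ≤ t := by omega
    have htK' : t - 1 < K := by omega
    set j0 : Fin K := ⟨t - 1, htK'⟩ with hj0
    have hj0v : j0.1 + 1 = t := by simp only [hj0]; omega
    have hmemIv : j0 ∈ Iv K s t := mem_Iv.mpr (by omega)
    have hj0Sy0 : j0 ∉ Sy0 := fun h => by have := hSy0 j0 h; omega
    have hj0Ja0 : j0 ∉ Ja0 := fun h => by have := hJa0 j0 h; omega
    have heq : ∀ A : Finset (Fin K), j0 ∉ A →
        (A ∪ Iv K s t).erase j0 = A ∪ Iv K s (t - 1) := by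
      intro A hA
      ext j
      simp only [Finset.mem_erase, Finset.mem_union, mem_Iv]
      constructor
      · rintro ⟨hne, h | h⟩
        · exact Or.inl h
        · right
          have hjt : j.1 + 1 ≠ t := by
            intro hc; exact hne (Fin.ext (by omega))
          omega
      · rintro (h | h)
        · exact ⟨fun he => hA (by rw [← he]; exact h), Or.inl h⟩
        · refine ⟨?_, Or.inr (by omega)⟩
          intro he
          have hv : j.1 + 1 = t := by rw [he]; exact hj0v
          omega
    have hmax : ∀ j ∈ Ja0 ∪ Iv K s t, j ≠ j0 → j < j0 := by
      intro j hj hne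
      rcases Finset.mem_union.mp hj with h | h
      · have := hJa0 j h; exact Fin.lt_def.mpr (by omega)
      · have h2 := mem_Iv.mp h
        have hjt : j.1 + 1 ≠ t := fun hc => hne (Fin.ext (by omega))
        exact Fin.lt_def.mpr (by omega)
    rw [peelA M ys rs _ _ j0 (Finset.mem_union_right _ hmemIv)
        (Finset.mem_union_right _ hmemIv) hmax, heq Sy0 hj0Sy0, heq Ja0 hj0Ja0]
    exact ih (t - 1) (by omega) (by omega)

lemma extractA (Sy Sr Ja Jb J' : Finset (Fin K)) (hsub : J' ⊆ Ja)
    (hc : ∀ j ∈ J', ∀ y : Fin K → Bool,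
        (∀ i, i ∉ Sy → y i = ys i) → M.a j y = M.a j ys) :
    G M ys rs Sy Sr Ja Jb = (∏ j ∈ J', M.a j ys) * G M ys rs Sy Sr (Ja \ J') Jb := by
  unfold G
  rw [Finset.mul_sum]
  refine Finset.sum_congr rfl fun y _ => ?_
  rw [Finset.mul_sum]
  refine Finset.sum_congr rfl fun r _ => ?_
  by_cases hC : (∀ j, j ∉ Sy → y j = ys j) ∧ (∀ j, j ∉ Sr → r j = rs j)
  · rw [if_pos hC, if_pos hC]
    have hsplit : ∏ j ∈ Ja, M.a j y
        = (∏ j ∈ J', M.a j ys) * ∏ j ∈ Ja \ J', M.a j y := by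
      rw [← Finset.prod_sdiff hsub, mul_comm]
      congr 1
      exact Finset.prod_congr rfl fun j hj => hc j hj y hC.1
    rw [hsplit]; ring
  · rw [if_neg hC, if_neg hC, mul_zero]

lemma extractB (Sy Sr Ja Jb J' : Finset (Fin K)) (hsub : J' ⊆ Jb)
    (hc : ∀ j ∈ J', ∀ y r : Fin K → Bool,
        (∀ i, i ∉ Sy → y i = ys i) → (∀ i, i ∉ Sr → r i = rs i) →
        M.b j y r = M.b j ys rs) :
    G M ys rs Sy Sr Ja Jb = (∏ j ∈ J', M.b j ys rs) * G M ys rs Sy Sr Ja (Jb \ J') := by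
  unfold G
  rw [Finset.mul_sum]
  refine Finset.sum_congr rfl fun y _ => ?_
  rw [Finset.mul_sum]
  refine Finset.sum_congr rfl fun r _ => ?_
  by_cases hC : (∀ j, j ∉ Sy → y j = ys j) ∧ (∀ j, j ∉ Sr → r j = rs j)
  · rw [if_pos hC, if_pos hC]
    have hsplit : ∏ j ∈ Jb, M.b j y r
        = (∏ j ∈ J', M.b j ys rs) * ∏ j ∈ Jb \ J', M.b j y r := by
      rw [← Finset.prod_sdiff hsub, mul_comm]
      congr 1
      exact Finset.prod_congr rfl fun j hj => hc j hj y r hC.1 hC.2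
    rw [hsplit]; ring
  · rw [if_neg hC, if_neg hC, mul_zero]

lemma G_closed (Ja Jb : Finset (Fin K)) :
    G M ys rs ∅ ∅ Ja Jb = (∏ j ∈ Ja, M.a j ys) * ∏ j ∈ Jb, M.b j ys rs := by
  unfold G
  have h1 : ∀ f g : Fin K → Bool,
      ((∀ j : Fin K, j ∉ (∅ : Finset (Fin K)) → f j = g j) ↔ f = g) := by
    intro f g; simp [funext_iff]
  simp only [h1]
  rw [Finset.sum_eq_single_of_mem ys (Finset.mem_univ ys)]
  · rw [Finset.sum_eq_single_of_mem rs (Finset.mem_univ rs)]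
    · simp
    · intro r _ hne
      rw [if_neg]; rintro ⟨-, h⟩; exact hne h
  · intro y _ hne
    refine Finset.sum_eq_zero fun r _ => ?_
    rw [if_neg]; rintro ⟨h, -⟩; exact hne h

lemma obs_eq_iff {y r : Fin K → Bool} {j : Fin K} {c v : Bool} :
    (obs y r j = if c then some v else none) ↔ (r j = c ∧ (c = true → y j = v)) := by
  unfold obs; cases c <;> cases hr : r j <;> simp [hr]

lemma obs_congr {y r y' r' : Fin K → Bool} {i : Fin K}
    (hr : r i = r' i) (hy : r' i = true → y i = y' i) : obs y r i = obs y' r' i := by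
  unfold obs
  rw [hr]
  cases h : r' i
  · simp
  · simp [hy h]
end Aux
/-- `fun j => f (pos j)` for a 1-based value sequence. -/
def tfun (K : ℕ) (f : ℕ → Bool) : Fin K → Bool := fun j => f (j.1 + 1)

section Generic

variable {K m : ℕ}

lemma Iv_eq_empty {lo hi : ℕ} (h : hi < lo ∨ K < lo) : Iv K lo hi = ∅ := by
  ext j
  have := j.2
  simp only [mem_Iv, Finset.notMem_empty, iff_false]
  omega

lemma univ_eq_Iv (t tp : ℕ) (h : tp = t + 1) :
    (Finset.univ : Finset (Fin K)) = Iv K tp K ∪ Iv K 1 t := by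
  ext j
  have := j.2
  simp only [Finset.mem_univ, Finset.mem_union, mem_Iv, true_iff]
  omega

lemma univ_eq_Iv' (t tp : ℕ) (h : tp = t + 1) :
    (Finset.univ : Finset (Fin K)) = Iv K 1 t ∪ Iv K tp K := by
  ext j
  have := j.2
  simp only [Finset.mem_univ, Finset.mem_union, mem_Iv, true_iff]
  omega

lemma Iv_sdiff (a b c bp : ℕ) (hbp : bp = b + 1) (hbc : b ≤ c) :
    Iv K a c \ Iv K bp c = Iv K a b := by
  ext j
  simp only [Finset.mem_sdiff, mem_Iv]
  omega

lemma Iv_sdiff' (a b c bp : ℕ) (hbp : bp = b + 1) (hab : a ≤ bp) (hbc : b ≤ c) :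
    Iv K a c \ Iv K a b = Iv K bp c := by
  ext j
  simp only [Finset.mem_sdiff, mem_Iv]
  omega

lemma Iv_subset (a b c d : ℕ) (h1 : a ≤ c) (h2 : d ≤ b) : Iv K c d ⊆ Iv K a b := by
  intro j hj
  have := mem_Iv.mp hj
  exact mem_Iv.mpr (by omega)

lemma prodSplit (f : Fin K → ℝ) (a b bp c : ℕ) (hbp : bp = b + 1) (hab : a ≤ bp)
    (hbc : b ≤ c) :
    ∏ j ∈ Iv K a c, f j = (∏ j ∈ Iv K a b, f j) * ∏ j ∈ Iv K bp c, f j := by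
  rw [← Finset.prod_union (by
    rw [Finset.disjoint_left]
    intro j hj1 hj2
    have := mem_Iv.mp hj1
    have := mem_Iv.mp hj2
    omega)]
  congr 1
  ext j
  simp only [Finset.mem_union, mem_Iv]
  omega

variable (M : Markov K m) (yv rv : ℕ → Bool)

lemma Pr_congr (E E' : (Fin K → Bool) → (Fin K → Bool) → Prop)
    (h : ∀ y r, E y r ↔ E' y r) : Pr M.p E = Pr M.p E' := by
  unfold Pr
  exact Finset.sum_congr rfl fun y _ => Finset.sum_congr rfl fun r _ => by simp only [h]

lemma peel_prefix (Sy Ja : Finset (Fin K)) (w1 t tp : ℕ) (htp : tp = t + 1)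
    (htw : t + 1 ≤ w1) (hf : t ≤ K) :
    G M (tfun K yv) (tfun K rv) Sy (Iv K w1 K ∪ Iv K 1 t) Ja (Iv K tp K ∪ Iv K 1 t)
      = G M (tfun K yv) (tfun K rv) Sy (Iv K w1 K) Ja (Iv K tp K) := by
  subst htp
  exact peelR_range M (tfun K yv) (tfun K rv) Sy Ja (Iv K w1 K) (Iv K (t+1) K) t hf
    (fun j hj => by have := mem_Iv.mp hj; omega)
    (fun j hj => by have := mem_Iv.mp hj; omega) t 1 le_rfl (by omega)

lemma reduceY (lom hi : ℕ) (hlh : lom ≤ hi) (hhK : hi ≤ K) :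
    G M (tfun K yv) (tfun K rv) (Iv K 1 lom ∪ Iv K (hi+1) K)
      Finset.univ Finset.univ Finset.univ
      = G M (tfun K yv) (tfun K rv) (Iv K 1 lom) ∅ (Iv K 1 hi) ∅ := by
  nth_rewrite 3 [univ_eq_Iv K (K+1) rfl]
  nth_rewrite 1 [univ_eq_Iv K (K+1) rfl]
  rw [peel_prefix M yv rv _ _ (K+1) K (K+1) rfl (by omega) le_rfl]
  rw [show Iv K (K+1) K = (∅ : Finset (Fin K)) from Iv_eq_empty (Or.inr (by omega))]
  rw [univ_eq_Iv' hi (hi+1) rfl]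
  exact peelA_range M (tfun K yv) (tfun K rv) (Iv K 1 lom) (Iv K 1 hi) (hi+1) (by omega)
    (fun j hj => by have := mem_Iv.mp hj; omega)
    (fun j hj => by have := mem_Iv.mp hj; omega) (K + 1 - (hi+1)) K le_rfl rfl

lemma convY (lo lom hi : ℕ) (hlo : lo = lom + 1) :
    Pr M.p (Yeq lo hi yv)
      = G M (tfun K yv) (tfun K rv) (Iv K 1 lom ∪ Iv K (hi+1) K)
          Finset.univ Finset.univ Finset.univ := by
  refine Pr_eq_G M _ _ _ _ _ (fun y r => ?_)
  constructor
  · intro h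
    refine ⟨fun j hj => ?_, fun j hj => absurd (Finset.mem_univ j) hj⟩
    simp only [Finset.mem_union, mem_Iv] at hj
    have hjK : j.1 < K := j.2
    exact h j (by omega) (by omega)
  · rintro ⟨h1, -⟩ j hl hh
    exact h1 j (by simp only [Finset.mem_union, mem_Iv]; omega)

lemma convYY (a b c cm d : ℕ) (hda : d + 1 = a) (hc : c = cm + 1) (hcd : c ≤ d + 1)
    (hab : a ≤ b + 1) :
    Pr M.p (fun y r => Yeq a b yv y r ∧ Yeq c d yv y r)
      = G M (tfun K yv) (tfun K rv) (Iv K 1 cm ∪ Iv K (b+1) K)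
          Finset.univ Finset.univ Finset.univ := by
  refine Pr_eq_G M _ _ _ _ _ (fun y r => ?_)
  constructor
  · rintro ⟨h1, h2⟩
    refine ⟨fun j hj => ?_, fun j hj => absurd (Finset.mem_univ j) hj⟩
    simp only [Finset.mem_union, mem_Iv] at hj
    have hjK : j.1 < K := j.2
    rcases le_or_gt (j.1 + 1) d with hd | hd
    · exact h2 j (by omega) (by omega)
    · exact h1 j (by omega) (by omega)
  · rintro ⟨h1, -⟩
    constructor <;> intro j hl hh <;>
      exact h1 j (by simp only [Finset.mem_union, mem_Iv]; omega)

end Generic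
/-- Free-`y` index set when outcomes are fixed on `[u,v]` and observed data on `[v+1,w]`. -/
def SyG (K : ℕ) (rv : ℕ → Bool) (u v w : ℕ) : Finset (Fin K) :=
  (Iv K 1 (u-1) ∪ (Iv K (v+1) w).filter fun j => rv (j.1+1) = false) ∪ Iv K (w+1) K

section Generic2

variable {K m : ℕ}

lemma memSyG (rv : ℕ → Bool) (u v w : ℕ) (hu : 1 ≤ u) (huv : u ≤ v + 1) (hvw : v ≤ w) (hwK : w ≤ K)
    (j : Fin K) :
    j ∉ SyG K rv u v w ↔
      ((u ≤ j.1+1 ∧ j.1+1 ≤ v) ∨ (v+1 ≤ j.1+1 ∧ j.1+1 ≤ w ∧ rv (j.1+1) = true)) := by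
  have hjK : j.1 < K := j.2
  simp only [SyG, Finset.mem_union, Finset.mem_filter, mem_Iv, not_or]
  constructor
  · rintro ⟨⟨h1, h2⟩, h3⟩
    cases h : rv (j.1 + 1)
    · have h2' : ¬(v+1 ≤ j.1+1 ∧ j.1+1 ≤ w) := fun hc => h2 ⟨hc, h⟩
      exact Or.inl ⟨by omega, by omega⟩
    · rcases le_or_gt (j.1+1) v with hc | hc
      · exact Or.inl ⟨by omega, hc⟩
      · exact Or.inr ⟨by omega, by omega, rfl⟩
  · intro hcase
    refine ⟨⟨fun hc => ?_, fun hc => ?_⟩, fun hc => ?_⟩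
    · rcases hcase with ⟨h1, h2⟩ | ⟨h1, h2, h3⟩ <;> omega
    · obtain ⟨hx, hb⟩ := hc
      rcases hcase with ⟨h1, h2⟩ | ⟨h1, h2, h3⟩
      · omega
      · rw [h3] at hb; simp at hb
    · rcases hcase with ⟨h1, h2⟩ | ⟨h1, h2, h3⟩ <;> omega

variable (M : Markov K m) (yv rv : ℕ → Bool)

lemma convODen (u v w o : ℕ) (hu : 1 ≤ u) (huv : u ≤ v + 1) (ho : o = v + 1) (hvw : v ≤ w) (hwK : w ≤ K) :
    Pr M.p (fun y r => Yeq u v yv y r ∧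
        Oeq o w (fun n => if rv n then some (yv n) else none) y r)
      = G M (tfun K yv) (tfun K rv) (SyG K rv u v w) (Iv K 1 v ∪ Iv K (w+1) K)
          Finset.univ Finset.univ := by
  refine Pr_eq_G M _ _ _ _ _ (fun y r => ?_)
  constructor
  · rintro ⟨hY, hO⟩
    constructor
    · intro j hj
      rw [memSyG rv u v w hu huv hvw hwK j] at hj
      rcases hj with ⟨h1, h2⟩ | ⟨h1, h2, h3⟩
      · exact hY j h1 h2
      · exact (obs_eq_iff.mp (hO j (by omega) (by omega))).2 h3
    · intro j hj
      simp only [Finset.mem_union, mem_Iv] at hj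
      have hjK : j.1 < K := j.2
      exact (obs_eq_iff.mp (hO j (by omega) (by omega))).1
  · rintro ⟨hCy, hCr⟩
    constructor
    · intro j h1 h2
      exact hCy j ((memSyG rv u v w hu huv hvw hwK j).mpr (Or.inl ⟨h1, h2⟩))
    · intro j h1 h2
      have hjK : j.1 < K := j.2
      have hr : r j = rv (j.1+1) :=
        hCr j (by simp only [Finset.mem_union, mem_Iv]; omega)
      refine obs_eq_iff.mpr ⟨hr, fun hrt => ?_⟩
      exact hCy j ((memSyG rv u v w hu huv hvw hwK j).mpr
        (Or.inr ⟨by omega, by omega, hrt⟩))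

lemma convONum (u v w o α am : ℕ) (hu : 1 ≤ u) (huv : u ≤ v + 1) (ho : o = v + 1) (hvw : v ≤ w)
    (hwK : w ≤ K) (hαm : α = am + 1) (huα : u ≤ α) (hαo : α ≤ o) :
    Pr M.p (fun y r => Req α v rv y r ∧ (Yeq u v yv y r ∧
        Oeq o w (fun n => if rv n then some (yv n) else none) y r))
      = G M (tfun K yv) (tfun K rv) (SyG K rv u v w) (Iv K 1 am ∪ Iv K (w+1) K)
          Finset.univ Finset.univ := by
  refine Pr_eq_G M _ _ _ _ _ (fun y r => ?_)
  constructor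
  · rintro ⟨hR, hY, hO⟩
    constructor
    · intro j hj
      rw [memSyG rv u v w hu huv hvw hwK j] at hj
      rcases hj with ⟨h1, h2⟩ | ⟨h1, h2, h3⟩
      · exact hY j h1 h2
      · exact (obs_eq_iff.mp (hO j (by omega) (by omega))).2 h3
    · intro j hj
      simp only [Finset.mem_union, mem_Iv] at hj
      have hjK : j.1 < K := j.2
      rcases le_or_gt (j.1+1) v with hc | hc
      · exact hR j (by omega) hc
      · exact (obs_eq_iff.mp (hO j (by omega) (by omega))).1
  · rintro ⟨hCy, hCr⟩
    refine ⟨fun j h1 h2 => ?_, fun j h1 h2 => ?_, fun j h1 h2 => ?_⟩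
    · exact hCr j (by simp only [Finset.mem_union, mem_Iv]; omega)
    · exact hCy j ((memSyG rv u v w hu huv hvw hwK j).mpr (Or.inl ⟨h1, h2⟩))
    · have hjK : j.1 < K := j.2
      have hr : r j = rv (j.1+1) :=
        hCr j (by simp only [Finset.mem_union, mem_Iv]; omega)
      refine obs_eq_iff.mpr ⟨hr, fun hrt => ?_⟩
      exact hCy j ((memSyG rv u v w hu huv hvw hwK j).mpr
        (Or.inr ⟨by omega, by omega, hrt⟩))

lemma factorA (lom mid mid1 hi : ℕ) (hmid1 : mid1 = mid + 1) (hlm : lom + m ≤ mid)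
    (hmh : mid ≤ hi) :
    G M (tfun K yv) (tfun K rv) (Iv K 1 lom) ∅ (Iv K 1 hi) ∅
      = (∏ j ∈ Iv K mid1 hi, M.a j (tfun K yv))
        * G M (tfun K yv) (tfun K rv) (Iv K 1 lom) ∅ (Iv K 1 mid) ∅ := by
  rw [extractA M (tfun K yv) (tfun K rv) (Iv K 1 lom) ∅ (Iv K 1 hi) ∅ (Iv K mid1 hi)
      (Iv_subset 1 hi mid1 hi (by omega) le_rfl) ?_, Iv_sdiff 1 mid hi mid1 hmid1 hmh]
  intro j hj y hCy
  obtain ⟨hj1, hj2⟩ := mem_Iv.mp hj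
  refine M.a_local j y (tfun K yv) ?_
  intro i hi1 hi2
  refine hCy i ?_
  simp only [mem_Iv]
  omega

lemma factorR (u v w o α am : ℕ) (hu : 1 ≤ u) (huv : u ≤ v + 1) (huα : u ≤ α) (ho : o = v + 1)
    (hα : α ≤ o) (hvw : v ≤ w) (hwK : w ≤ K) (hαm : α = am + 1)
    (hwin : u + m ≤ α ∨ u = 1) (hobs : v + m ≤ w ∨ w = K) (Ja : Finset (Fin K)) :
    G M (tfun K yv) (tfun K rv) (SyG K rv u v w) (Iv K (w+1) K) Ja (Iv K α K)
      = (∏ j ∈ Iv K α v, M.b j (tfun K yv) (tfun K rv))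
        * G M (tfun K yv) (tfun K rv) (SyG K rv u v w) (Iv K (w+1) K) Ja (Iv K o K) := by
  rw [extractB M (tfun K yv) (tfun K rv) (SyG K rv u v w) (Iv K (w+1) K) Ja (Iv K α K)
      (Iv K α v) (Iv_subset α K α v le_rfl (by omega)) ?_,
    Iv_sdiff' α v K o ho hα (by omega)]
  intro j hj y r hCy hCr
  obtain ⟨hj1, hj2⟩ := mem_Iv.mp hj
  have hjK : j.1 < K := j.2
  have hrj : ∀ i : Fin K, i.1 + 1 ≤ w → r i = rv (i.1+1) := fun i hi =>
    hCr i (by simp only [mem_Iv]; omega)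
  refine M.b_local j y r (tfun K yv) (tfun K rv) (hrj j (by omega)) ?_ ?_
  · intro i hi1 hi2
    exact hCy i ((memSyG rv u v w hu huv hvw hwK i).mpr (Or.inl ⟨by omega, by omega⟩))
  · intro i hi1 hi2
    have hiK : i.1 < K := i.2
    have hri : r i = rv (i.1+1) := hrj i (by omega)
    refine obs_congr hri ?_
    intro hrt
    rcases le_or_gt (i.1 + 1) v with hc | hc
    · exact hCy i ((memSyG rv u v w hu huv hvw hwK i).mpr (Or.inl ⟨by omega, hc⟩))
    · exact hCy i ((memSyG rv u v w hu huv hvw hwK i).mpr (Or.inr ⟨by omega, by omega, hrt⟩))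

end Generic2

/-- Reduced factorization, case `m < k < K − m − 1`.  Under the
`m`th-order Markov model, for every integer `k` with `m < k < K − m − 1` and all
`(y, r) ∈ {0,1}^K × {0,1}^K`, the joint law factorizes as
`p(y,r) = f(Ȳ_{k−m}) · f(Ȳᵐₖ | Ȳ_{k−m}) · f(Y̲^{m+1}_{k−1} | Ȳᵐₖ)
  · f(Y_{k+m+1} | Y̲^{m+1}_{k−1}) · f(Y̲_{k+m+1} | Y̲^{m+2}_{k−1})
  · f(R̄_{k−m} | Ȳ_{k−m}, Ōᵐₖ) · f(R̄ᵐₖ | Ȳₖ, O̲^{m+1}_{k−1})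
  · f(R̲^{m+1}_{k−1} | Ȳ^{2m+1}_{k+m+1}, O̲_{k+m}) · f(R_{k+m+1} | Y̲^{m+2}_{k−1}, O̲_{k+m+1})
  · f(R̲_{k+m+1} | Y̲_{k−1})`,
where each factor is the corresponding conditional pmf of `p` evaluated at the entries of
`(y, r)`, with all `O`-values determined by `(y, r)` via `Oⱼ = (1, yⱼ)` if `rⱼ = 1` and
`Oⱼ = (0, ?)` otherwise. -/
theorem statement9 (K m : ℕ) (hm : 1 ≤ m) (hKm : 2 * m + 1 < K) (M : Markov K m)
    (k : ℕ) (hk1 : m < k) (hk2 : k < K - m - 1)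
    (yv : ℕ → Bool) (rv : ℕ → Bool) :
    M.p (fun j => yv (j.1 + 1)) (fun j => rv (j.1 + 1))
      = Pr M.p (Yeq 1 (k - m - 1) yv)
        * cPr M.p (Yeq (k - m) (k - 1) yv) (Yeq 1 (k - m - 1) yv)
        * cPr M.p (Yeq k (k + m) yv) (Yeq (k - m) (k - 1) yv)
        * cPr M.p (Yeq (k + m + 1) (k + m + 1) yv) (Yeq k (k + m) yv)
        * cPr M.p (Yeq (k + m + 2) K yv) (Yeq k (k + m + 1) yv)
        * cPr M.p (Req 1 (k - m - 1) rv)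
            (fun y r => Yeq 1 (k - m - 1) yv y r ∧
              Oeq (k - m) (k - 1) (fun n => if rv n then some (yv n) else none) y r)
        * cPr M.p (Req (k - m) (k - 1) rv)
            (fun y r => Yeq 1 (k - 1) yv y r ∧
              Oeq k (k + m) (fun n => if rv n then some (yv n) else none) y r)
        * cPr M.p (Req k (k + m) rv)
            (fun y r => Yeq (k - m) (k + m) yv y r ∧
              Oeq (k + m + 1) K (fun n => if rv n then some (yv n) else none) y r)
        * cPr M.p (Req (k + m + 1) (k + m + 1) rv)
            (fun y r => Yeq k (k + m + 1) yv y r ∧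
              Oeq (k + m + 2) K (fun n => if rv n then some (yv n) else none) y r)
        * cPr M.p (Req (k + m + 2) K rv) (Yeq k K yv) := by
  have hkK : k + m + 2 ≤ K := by omega
  have hselfY : ∀ lo hi : ℕ, Yeq lo hi yv (tfun K yv) (tfun K rv) := fun lo hi j _ _ => rfl
  have hselfO : ∀ o w : ℕ,
      Oeq o w (fun n => if rv n then some (yv n) else none) (tfun K yv) (tfun K rv) :=
    fun o w j _ _ => rfl
  have hselfR : ∀ lo hi : ℕ, Req lo hi rv (tfun K yv) (tfun K rv) := fun lo hi j _ _ => rfl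
  -- Factors 1 & 2
  have hPr1pos : 0 < Pr M.p (Yeq 1 (k - m - 1) yv) :=
    Pr_pos M _ (tfun K yv) (tfun K rv) (hselfY 1 (k - m - 1))
  have hnum2 : Pr M.p (fun y r => Yeq (k - m) (k - 1) yv y r ∧ Yeq 1 (k - m - 1) yv y r)
      = ∏ j ∈ Iv K 1 (k - 1), M.a j (tfun K yv) := by
    rw [convYY M yv rv (k - m) (k - 1) 1 0 (k - m - 1) (by omega) rfl (by omega) (by omega),
      reduceY M yv rv 0 (k - 1) (by omega) (by omega),
      show Iv K 1 0 = (∅ : Finset (Fin K)) from Iv_eq_empty (Or.inl (by omega)), G_closed]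
    simp
  have hf12 : Pr M.p (Yeq 1 (k - m - 1) yv)
        * cPr M.p (Yeq (k - m) (k - 1) yv) (Yeq 1 (k - m - 1) yv)
      = ∏ j ∈ Iv K 1 (k - 1), M.a j (tfun K yv) := by
    simp only [cPr]
    rw [hnum2, mul_comm, div_mul_cancel₀ _ hPr1pos.ne']
  -- Factor 3
  have hden3 : Pr M.p (Yeq (k - m) (k - 1) yv)
      = G M (tfun K yv) (tfun K rv) (Iv K 1 (k - m - 1)) ∅ (Iv K 1 (k - 1)) ∅ := by
    rw [convY M yv rv (k - m) (k - m - 1) (k - 1) (by omega),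
      reduceY M yv rv (k - m - 1) (k - 1) (by omega) (by omega)]
  have hnum3 : Pr M.p (fun y r => Yeq k (k + m) yv y r ∧ Yeq (k - m) (k - 1) yv y r)
      = (∏ j ∈ Iv K k (k + m), M.a j (tfun K yv)) * Pr M.p (Yeq (k - m) (k - 1) yv) := by
    rw [convYY M yv rv k (k + m) (k - m) (k - m - 1) (k - 1) (by omega) (by omega) (by omega)
        (by omega),
      reduceY M yv rv (k - m - 1) (k + m) (by omega) (by omega),
      factorA M yv rv (k - m - 1) (k - 1) k (k + m) (by omega) (by omega) (by omega), hden3]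
  have hden3pos : 0 < Pr M.p (Yeq (k - m) (k - 1) yv) :=
    Pr_pos M _ (tfun K yv) (tfun K rv) (hselfY _ _)
  have hf3 : cPr M.p (Yeq k (k + m) yv) (Yeq (k - m) (k - 1) yv)
      = ∏ j ∈ Iv K k (k + m), M.a j (tfun K yv) := by
    simp only [cPr]
    rw [hnum3, mul_div_assoc, div_self hden3pos.ne', mul_one]
  -- Factor 4
  have hden4 : Pr M.p (Yeq k (k + m) yv)
      = G M (tfun K yv) (tfun K rv) (Iv K 1 (k - 1)) ∅ (Iv K 1 (k + m)) ∅ := by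
    rw [convY M yv rv k (k - 1) (k + m) (by omega),
      reduceY M yv rv (k - 1) (k + m) (by omega) (by omega)]
  have hnum4 : Pr M.p (fun y r => Yeq (k + m + 1) (k + m + 1) yv y r ∧ Yeq k (k + m) yv y r)
      = (∏ j ∈ Iv K (k + m + 1) (k + m + 1), M.a j (tfun K yv)) * Pr M.p (Yeq k (k + m) yv) := by
    rw [convYY M yv rv (k + m + 1) (k + m + 1) k (k - 1) (k + m) (by omega) (by omega) (by omega)
        (by omega),
      reduceY M yv rv (k - 1) (k + m + 1) (by omega) (by omega),
      factorA M yv rv (k - 1) (k + m) (k + m + 1) (k + m + 1) (by omega) (by omega) (by omega),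
      hden4]
  have hden4pos : 0 < Pr M.p (Yeq k (k + m) yv) :=
    Pr_pos M _ (tfun K yv) (tfun K rv) (hselfY _ _)
  have hf4 : cPr M.p (Yeq (k + m + 1) (k + m + 1) yv) (Yeq k (k + m) yv)
      = ∏ j ∈ Iv K (k + m + 1) (k + m + 1), M.a j (tfun K yv) := by
    simp only [cPr]
    rw [hnum4, mul_div_assoc, div_self hden4pos.ne', mul_one]
  -- Factor 5
  have hden5 : Pr M.p (Yeq k (k + m + 1) yv)
      = G M (tfun K yv) (tfun K rv) (Iv K 1 (k - 1)) ∅ (Iv K 1 (k + m + 1)) ∅ := by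
    rw [convY M yv rv k (k - 1) (k + m + 1) (by omega),
      reduceY M yv rv (k - 1) (k + m + 1) (by omega) (by omega)]
  have hnum5 : Pr M.p (fun y r => Yeq (k + m + 2) K yv y r ∧ Yeq k (k + m + 1) yv y r)
      = (∏ j ∈ Iv K (k + m + 2) K, M.a j (tfun K yv)) * Pr M.p (Yeq k (k + m + 1) yv) := by
    rw [convYY M yv rv (k + m + 2) K k (k - 1) (k + m + 1) (by omega) (by omega) (by omega)
        (by omega),
      reduceY M yv rv (k - 1) K (by omega) (by omega),
      factorA M yv rv (k - 1) (k + m + 1) (k + m + 2) K (by omega) (by omega) (by omega), hden5]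
  have hden5pos : 0 < Pr M.p (Yeq k (k + m + 1) yv) :=
    Pr_pos M _ (tfun K yv) (tfun K rv) (hselfY _ _)
  have hf5 : cPr M.p (Yeq (k + m + 2) K yv) (Yeq k (k + m + 1) yv)
      = ∏ j ∈ Iv K (k + m + 2) K, M.a j (tfun K yv) := by
    simp only [cPr]
    rw [hnum5, mul_div_assoc, div_self hden5pos.ne', mul_one]
  -- Factor 6
  have hden6 : Pr M.p (fun y r => Yeq 1 (k - m - 1) yv y r ∧
        Oeq (k - m) (k - 1) (fun n => if rv n then some (yv n) else none) y r)
      = G M (tfun K yv) (tfun K rv) (SyG K rv 1 (k - m - 1) (k - 1)) (Iv K (k - 1 + 1) K)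
          Finset.univ (Iv K (k - m) K) := by
    rw [convODen M yv rv 1 (k - m - 1) (k - 1) (k - m) le_rfl (by omega) (by omega) (by omega)
        (by omega),
      Finset.union_comm (Iv K 1 (k - m - 1)) (Iv K (k - 1 + 1) K)]
    nth_rewrite 2 [univ_eq_Iv (k - m - 1) (k - m) (by omega)]
    rw [peel_prefix M yv rv _ _ (k - 1 + 1) (k - m - 1) (k - m) (by omega) (by omega) (by omega)]
  have hnum6 : Pr M.p (fun y r => Req 1 (k - m - 1) rv y r ∧ (Yeq 1 (k - m - 1) yv y r ∧
        Oeq (k - m) (k - 1) (fun n => if rv n then some (yv n) else none) y r))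
      = (∏ j ∈ Iv K 1 (k - m - 1), M.b j (tfun K yv) (tfun K rv))
        * Pr M.p (fun y r => Yeq 1 (k - m - 1) yv y r ∧
            Oeq (k - m) (k - 1) (fun n => if rv n then some (yv n) else none) y r) := by
    rw [convONum M yv rv 1 (k - m - 1) (k - 1) (k - m) 1 0 le_rfl (by omega) (by omega)
        (by omega) (by omega) rfl (by omega) (by omega),
      Finset.union_comm (Iv K 1 0) (Iv K (k - 1 + 1) K)]
    nth_rewrite 2 [univ_eq_Iv 0 1 rfl]
    rw [peel_prefix M yv rv _ _ (k - 1 + 1) 0 1 rfl (by omega) (by omega),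
      factorR M yv rv 1 (k - m - 1) (k - 1) (k - m) 1 0 le_rfl (by omega) le_rfl (by omega)
        (by omega) (by omega) (by omega) rfl (Or.inr rfl) (Or.inl (by omega)) Finset.univ,
      hden6]
  have hden6pos : 0 < Pr M.p (fun y r => Yeq 1 (k - m - 1) yv y r ∧
        Oeq (k - m) (k - 1) (fun n => if rv n then some (yv n) else none) y r) :=
    Pr_pos M _ (tfun K yv) (tfun K rv) ⟨hselfY _ _, hselfO _ _⟩
  have hf6 : cPr M.p (Req 1 (k - m - 1) rv)
        (fun y r => Yeq 1 (k - m - 1) yv y r ∧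
          Oeq (k - m) (k - 1) (fun n => if rv n then some (yv n) else none) y r)
      = ∏ j ∈ Iv K 1 (k - m - 1), M.b j (tfun K yv) (tfun K rv) := by
    simp only [cPr]
    rw [hnum6, mul_div_assoc, div_self hden6pos.ne', mul_one]
  -- Factor 7
  have hden7 : Pr M.p (fun y r => Yeq 1 (k - 1) yv y r ∧
        Oeq k (k + m) (fun n => if rv n then some (yv n) else none) y r)
      = G M (tfun K yv) (tfun K rv) (SyG K rv 1 (k - 1) (k + m)) (Iv K (k + m + 1) K)
          Finset.univ (Iv K k K) := by
    rw [convODen M yv rv 1 (k - 1) (k + m) k le_rfl (by omega) (by omega) (by omega) (by omega),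
      Finset.union_comm (Iv K 1 (k - 1)) (Iv K (k + m + 1) K)]
    nth_rewrite 2 [univ_eq_Iv (k - 1) k (by omega)]
    rw [peel_prefix M yv rv _ _ (k + m + 1) (k - 1) k (by omega) (by omega) (by omega)]
  have hnum7 : Pr M.p (fun y r => Req (k - m) (k - 1) rv y r ∧ (Yeq 1 (k - 1) yv y r ∧
        Oeq k (k + m) (fun n => if rv n then some (yv n) else none) y r))
      = (∏ j ∈ Iv K (k - m) (k - 1), M.b j (tfun K yv) (tfun K rv))
        * Pr M.p (fun y r => Yeq 1 (k - 1) yv y r ∧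
            Oeq k (k + m) (fun n => if rv n then some (yv n) else none) y r) := by
    rw [convONum M yv rv 1 (k - 1) (k + m) k (k - m) (k - m - 1) le_rfl (by omega) (by omega)
        (by omega) (by omega) (by omega) (by omega) (by omega),
      Finset.union_comm (Iv K 1 (k - m - 1)) (Iv K (k + m + 1) K)]
    nth_rewrite 2 [univ_eq_Iv (k - m - 1) (k - m) (by omega)]
    rw [peel_prefix M yv rv _ _ (k + m + 1) (k - m - 1) (k - m) (by omega) (by omega) (by omega),
      factorR M yv rv 1 (k - 1) (k + m) k (k - m) (k - m - 1) le_rfl (by omega) (by omega)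
        (by omega) (by omega) (by omega) (by omega) (by omega) (Or.inr rfl) (Or.inl (by omega))
        Finset.univ,
      hden7]
  have hden7pos : 0 < Pr M.p (fun y r => Yeq 1 (k - 1) yv y r ∧
        Oeq k (k + m) (fun n => if rv n then some (yv n) else none) y r) :=
    Pr_pos M _ (tfun K yv) (tfun K rv) ⟨hselfY _ _, hselfO _ _⟩
  have hf7 : cPr M.p (Req (k - m) (k - 1) rv)
        (fun y r => Yeq 1 (k - 1) yv y r ∧
          Oeq k (k + m) (fun n => if rv n then some (yv n) else none) y r)
      = ∏ j ∈ Iv K (k - m) (k - 1), M.b j (tfun K yv) (tfun K rv) := by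
    simp only [cPr]
    rw [hnum7, mul_div_assoc, div_self hden7pos.ne', mul_one]
  -- Factor 8
  have hden8 : Pr M.p (fun y r => Yeq (k - m) (k + m) yv y r ∧
        Oeq (k + m + 1) K (fun n => if rv n then some (yv n) else none) y r)
      = G M (tfun K yv) (tfun K rv) (SyG K rv (k - m) (k + m) K) (Iv K (K + 1) K)
          Finset.univ (Iv K (k + m + 1) K) := by
    rw [convODen M yv rv (k - m) (k + m) K (k + m + 1) (by omega) (by omega) (by omega)
        (by omega) (by omega),
      Finset.union_comm (Iv K 1 (k + m)) (Iv K (K + 1) K)]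
    nth_rewrite 2 [univ_eq_Iv (k + m) (k + m + 1) rfl]
    rw [peel_prefix M yv rv _ _ (K + 1) (k + m) (k + m + 1) rfl (by omega) (by omega)]
  have hnum8 : Pr M.p (fun y r => Req k (k + m) rv y r ∧ (Yeq (k - m) (k + m) yv y r ∧
        Oeq (k + m + 1) K (fun n => if rv n then some (yv n) else none) y r))
      = (∏ j ∈ Iv K k (k + m), M.b j (tfun K yv) (tfun K rv))
        * Pr M.p (fun y r => Yeq (k - m) (k + m) yv y r ∧
            Oeq (k + m + 1) K (fun n => if rv n then some (yv n) else none) y r) := by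
    rw [convONum M yv rv (k - m) (k + m) K (k + m + 1) k (k - 1) (by omega) (by omega)
        (by omega) (by omega) (by omega) (by omega) (by omega) (by omega),
      Finset.union_comm (Iv K 1 (k - 1)) (Iv K (K + 1) K)]
    nth_rewrite 2 [univ_eq_Iv (k - 1) k (by omega)]
    rw [peel_prefix M yv rv _ _ (K + 1) (k - 1) k (by omega) (by omega) (by omega),
      factorR M yv rv (k - m) (k + m) K (k + m + 1) k (k - 1) (by omega) (by omega) (by omega)
        (by omega) (by omega) (by omega) (by omega) (by omega) (Or.inl (by omega)) (Or.inr rfl)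
        Finset.univ,
      hden8]
  have hden8pos : 0 < Pr M.p (fun y r => Yeq (k - m) (k + m) yv y r ∧
        Oeq (k + m + 1) K (fun n => if rv n then some (yv n) else none) y r) :=
    Pr_pos M _ (tfun K yv) (tfun K rv) ⟨hselfY _ _, hselfO _ _⟩
  have hf8 : cPr M.p (Req k (k + m) rv)
        (fun y r => Yeq (k - m) (k + m) yv y r ∧
          Oeq (k + m + 1) K (fun n => if rv n then some (yv n) else none) y r)
      = ∏ j ∈ Iv K k (k + m), M.b j (tfun K yv) (tfun K rv) := by
    simp only [cPr]
    rw [hnum8, mul_div_assoc, div_self hden8pos.ne', mul_one]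
  -- Factor 9
  have hden9 : Pr M.p (fun y r => Yeq k (k + m + 1) yv y r ∧
        Oeq (k + m + 2) K (fun n => if rv n then some (yv n) else none) y r)
      = G M (tfun K yv) (tfun K rv) (SyG K rv k (k + m + 1) K) (Iv K (K + 1) K)
          Finset.univ (Iv K (k + m + 2) K) := by
    rw [convODen M yv rv k (k + m + 1) K (k + m + 2) (by omega) (by omega) (by omega)
        (by omega) (by omega),
      Finset.union_comm (Iv K 1 (k + m + 1)) (Iv K (K + 1) K)]
    nth_rewrite 2 [univ_eq_Iv (k + m + 1) (k + m + 2) rfl]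
    rw [peel_prefix M yv rv _ _ (K + 1) (k + m + 1) (k + m + 2) rfl (by omega) (by omega)]
  have hnum9 : Pr M.p (fun y r => Req (k + m + 1) (k + m + 1) rv y r ∧ (Yeq k (k + m + 1) yv y r ∧
        Oeq (k + m + 2) K (fun n => if rv n then some (yv n) else none) y r))
      = (∏ j ∈ Iv K (k + m + 1) (k + m + 1), M.b j (tfun K yv) (tfun K rv))
        * Pr M.p (fun y r => Yeq k (k + m + 1) yv y r ∧
            Oeq (k + m + 2) K (fun n => if rv n then some (yv n) else none) y r) := by
    rw [convONum M yv rv k (k + m + 1) K (k + m + 2) (k + m + 1) (k + m) (by omega) (by omega)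
        (by omega) (by omega) (by omega) (by omega) (by omega) (by omega),
      Finset.union_comm (Iv K 1 (k + m)) (Iv K (K + 1) K)]
    nth_rewrite 2 [univ_eq_Iv (k + m) (k + m + 1) rfl]
    rw [peel_prefix M yv rv _ _ (K + 1) (k + m) (k + m + 1) rfl (by omega) (by omega),
      factorR M yv rv k (k + m + 1) K (k + m + 2) (k + m + 1) (k + m) (by omega) (by omega)
        (by omega) (by omega) (by omega) (by omega) (by omega) (by omega) (Or.inl (by omega))
        (Or.inr rfl) Finset.univ,
      hden9]
  have hden9pos : 0 < Pr M.p (fun y r => Yeq k (k + m + 1) yv y r ∧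
        Oeq (k + m + 2) K (fun n => if rv n then some (yv n) else none) y r) :=
    Pr_pos M _ (tfun K yv) (tfun K rv) ⟨hselfY _ _, hselfO _ _⟩
  have hf9 : cPr M.p (Req (k + m + 1) (k + m + 1) rv)
        (fun y r => Yeq k (k + m + 1) yv y r ∧
          Oeq (k + m + 2) K (fun n => if rv n then some (yv n) else none) y r)
      = ∏ j ∈ Iv K (k + m + 1) (k + m + 1), M.b j (tfun K yv) (tfun K rv) := by
    simp only [cPr]
    rw [hnum9, mul_div_assoc, div_self hden9pos.ne', mul_one]
  -- Factor 10
  have hOvac : ∀ y r : Fin K → Bool,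
      Oeq (K + 1) K (fun n => if rv n then some (yv n) else none) y r :=
    fun y r j h1 _ => absurd h1 (by have := j.2; omega)
  have hden10 : Pr M.p (Yeq k K yv)
      = G M (tfun K yv) (tfun K rv) (SyG K rv k K K) (Iv K (K + 1) K)
          Finset.univ (Iv K (K + 1) K) := by
    rw [Pr_congr M (Yeq k K yv) (fun y r => Yeq k K yv y r ∧
          Oeq (K + 1) K (fun n => if rv n then some (yv n) else none) y r)
        (fun y r => ⟨fun h => ⟨h, hOvac y r⟩, fun h => h.1⟩),
      convODen M yv rv k K K (K + 1) (by omega) (by omega) (by omega) (by omega) (by omega),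
      Finset.union_comm (Iv K 1 K) (Iv K (K + 1) K)]
    nth_rewrite 2 [univ_eq_Iv K (K + 1) rfl]
    rw [peel_prefix M yv rv _ _ (K + 1) K (K + 1) rfl (by omega) (by omega)]
  have hnum10 : Pr M.p (fun y r => Req (k + m + 2) K rv y r ∧ Yeq k K yv y r)
      = (∏ j ∈ Iv K (k + m + 2) K, M.b j (tfun K yv) (tfun K rv))
        * Pr M.p (Yeq k K yv) := by
    rw [Pr_congr M _ (fun y r => Req (k + m + 2) K rv y r ∧ (Yeq k K yv y r ∧
          Oeq (K + 1) K (fun n => if rv n then some (yv n) else none) y r))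
        (fun y r => ⟨fun h => ⟨h.1, h.2, hOvac y r⟩, fun h => ⟨h.1, h.2.1⟩⟩),
      convONum M yv rv k K K (K + 1) (k + m + 2) (k + m + 1) (by omega) (by omega) (by omega)
        (by omega) (by omega) (by omega) (by omega) (by omega),
      Finset.union_comm (Iv K 1 (k + m + 1)) (Iv K (K + 1) K)]
    nth_rewrite 2 [univ_eq_Iv (k + m + 1) (k + m + 2) rfl]
    rw [peel_prefix M yv rv _ _ (K + 1) (k + m + 1) (k + m + 2) rfl (by omega) (by omega),
      factorR M yv rv k K K (K + 1) (k + m + 2) (k + m + 1) (by omega) (by omega) (by omega)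
        (by omega) (by omega) (by omega) (by omega) (by omega) (Or.inl (by omega)) (Or.inr rfl)
        Finset.univ,
      hden10]
  have hden10pos : 0 < Pr M.p (Yeq k K yv) :=
    Pr_pos M _ (tfun K yv) (tfun K rv) (hselfY _ _)
  have hf10 : cPr M.p (Req (k + m + 2) K rv) (Yeq k K yv)
      = ∏ j ∈ Iv K (k + m + 2) K, M.b j (tfun K yv) (tfun K rv) := by
    simp only [cPr]
    rw [hnum10, mul_div_assoc, div_self hden10pos.ne', mul_one]
  -- Assemble
  rw [hf12, hf3, hf4, hf5, hf6, hf7, hf8, hf9, hf10]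
  show M.p (tfun K yv) (tfun K rv) = _
  rw [M.factor, Finset.prod_mul_distrib]
  have hU : (Finset.univ : Finset (Fin K)) = Iv K 1 K := by
    ext j; have := j.2
    simp only [Finset.mem_univ, mem_Iv, true_iff]
    omega
  have hA : ∏ j : Fin K, M.a j (tfun K yv)
      = (∏ j ∈ Iv K 1 (k - 1), M.a j (tfun K yv))
        * ((∏ j ∈ Iv K k (k + m), M.a j (tfun K yv))
          * ((∏ j ∈ Iv K (k + m + 1) (k + m + 1), M.a j (tfun K yv))
            * ∏ j ∈ Iv K (k + m + 2) K, M.a j (tfun K yv))) := by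
    rw [hU, prodSplit _ 1 (k - 1) k K (by omega) (by omega) (by omega),
      prodSplit _ k (k + m) (k + m + 1) K (by omega) (by omega) (by omega),
      prodSplit _ (k + m + 1) (k + m + 1) (k + m + 2) K (by omega) (by omega) (by omega)]
  have hB : ∏ j : Fin K, M.b j (tfun K yv) (tfun K rv)
      = (∏ j ∈ Iv K 1 (k - m - 1), M.b j (tfun K yv) (tfun K rv))
        * ((∏ j ∈ Iv K (k - m) (k - 1), M.b j (tfun K yv) (tfun K rv))
          * ((∏ j ∈ Iv K k (k + m), M.b j (tfun K yv) (tfun K rv))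
            * ((∏ j ∈ Iv K (k + m + 1) (k + m + 1), M.b j (tfun K yv) (tfun K rv))
              * ∏ j ∈ Iv K (k + m + 2) K, M.b j (tfun K yv) (tfun K rv)))) := by
    rw [hU, prodSplit _ 1 (k - m - 1) (k - m) K (by omega) (by omega) (by omega),
      prodSplit _ (k - m) (k - 1) k K (by omega) (by omega) (by omega),
      prodSplit _ k (k + m) (k + m + 1) K (by omega) (by omega) (by omega),
      prodSplit _ (k + m + 1) (k + m + 1) (k + m + 2) K (by omega) (by omega) (by omega)]
  rw [hA, hB]
  ring

end MRM
end

section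
/- (Block factorization of the tail response indicators.) Under the mth-order Markov model, for every integer k ≥ 1 with k + m + 2 ≤ K and all values of the variables, f(R̲_{k+m+1} | Y̲_{k−1}) = ∏_{j=k+m+2}^{K} f(Rⱼ | Ȳ^{m+1}_{j+1}, O̲ᵐⱼ), i.e., the conditional pmf of (R_{k+m+2},…,R_K) given (Y_k,…,Y_K) equals the product over j of the conditional pmfs of Rⱼ given (Y_{j−m},…,Yⱼ, O_{j+1},…,O_{min(j+m,K)}), where the O-arguments in each factor are determined by the conditioning values and the other R-entries in the block. -/
open scoped Classical BigOperators

namespace MRM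

open Finset

variable {K m : ℕ}

/-- Master elimination lemma: summing out the response indicators below threshold `t`,
with the indicators from `t` on pinned to `r0`. -/
lemma MG (M : Markov K m) (y : Fin K → Bool) (t : ℕ) :
    ∀ (g : (Fin K → Bool) → ℝ),
      (∀ r r' : Fin K → Bool, (∀ i : Fin K, t ≤ i.1 → r i = r' i) → g r = g r') →
      ∀ r0 : Fin K → Bool,
      (∑ r : Fin K → Bool,
        if (∀ i : Fin K, t ≤ i.1 → r i = r0 i) then
          (∏ i ∈ univ.filter (fun i : Fin K => i.1 < t), M.b i y r) * g r else 0)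
      = g r0 := by
  induction t with
  | zero =>
      intro g hg r0
      have h2 : (univ.filter (fun i : Fin K => i.1 < 0)) = (∅ : Finset (Fin K)) := by
        ext i; simp
      have : ∀ r : Fin K → Bool,
          (if (∀ i : Fin K, 0 ≤ i.1 → r i = r0 i) then
            (∏ i ∈ univ.filter (fun i : Fin K => i.1 < 0), M.b i y r) * g r else 0)
          = if r = r0 then g r else 0 := by
        intro r
        rw [h2, Finset.prod_empty, one_mul]
        congr 1
        rw [eq_iff_iff]
        constructor
        · intro h; funext i; exact h i (Nat.zero_le _)
        · rintro rfl i _; rfl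
      rw [Finset.sum_congr rfl (fun r _ => this r), Finset.sum_ite_eq' univ r0 g,
        if_pos (mem_univ r0)]
  | succ t ih =>
      intro g hg r0
      by_cases hK : K ≤ t
      · have hfil : (univ.filter (fun i : Fin K => i.1 < t + 1))
            = univ.filter (fun i : Fin K => i.1 < t) := by
          ext i
          simp only [mem_filter, mem_univ, true_and]
          have := i.2; omega
        have hg' : ∀ r r' : Fin K → Bool, (∀ i : Fin K, t ≤ i.1 → r i = r' i) → g r = g r' :=
          fun r r' h => hg r r' (fun i hi => h i (by omega))
        rw [← ih g hg' r0]
        refine Finset.sum_congr rfl (fun r _ => ?_)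
        rw [hfil]
        have hc : (∀ i : Fin K, t + 1 ≤ i.1 → r i = r0 i)
            ↔ (∀ i : Fin K, t ≤ i.1 → r i = r0 i) := by
          constructor <;> intro h i hi <;> exact absurd hi (by have := i.2; omega)
        simp only [hc]
      · push_neg at hK
        set τ : Fin K := ⟨t, hK⟩ with hτdef
        have key : ∀ r : Fin K → Bool,
            (if (∀ i : Fin K, t + 1 ≤ i.1 → r i = r0 i) then
               (∏ i ∈ univ.filter (fun i : Fin K => i.1 < t + 1), M.b i y r) * g r else 0)
          = ∑ v : Bool,
              (if (∀ i : Fin K, t ≤ i.1 → r i = Function.update r0 τ v i) then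
               (∏ i ∈ univ.filter (fun i : Fin K => i.1 < t), M.b i y r)
                 * (M.b τ y r * g r) else 0) := by
          intro r
          have hτnot : τ ∉ univ.filter (fun i : Fin K => i.1 < t) := by
            simp [hτdef]
          have hins : univ.filter (fun i : Fin K => i.1 < t + 1)
              = insert τ (univ.filter (fun i : Fin K => i.1 < t)) := by
            ext i
            simp only [mem_filter, mem_univ, true_and, mem_insert]
            constructor
            · intro h
              rcases Nat.lt_succ_iff_lt_or_eq.mp h with h | h
              · exact Or.inr h
              · exact Or.inl (Fin.ext h)
            · rintro (rfl | h)
              · exact Nat.lt_succ_self t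
              · omega
          have hprod : (∏ i ∈ univ.filter (fun i : Fin K => i.1 < t + 1), M.b i y r)
              = M.b τ y r * ∏ i ∈ univ.filter (fun i : Fin K => i.1 < t), M.b i y r := by
            rw [hins, Finset.prod_insert hτnot]
          have hc : ∀ v : Bool, (∀ i : Fin K, t ≤ i.1 → r i = Function.update r0 τ v i)
              ↔ (r τ = v ∧ ∀ i : Fin K, t + 1 ≤ i.1 → r i = r0 i) := by
            intro v
            constructor
            · intro h
              refine ⟨by simpa using h τ (le_refl t), fun i hi => ?_⟩
              have hne : i ≠ τ := by
                intro e; subst e; simp only [hτdef] at hi; omega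
              have := h i (by omega)
              rwa [Function.update_of_ne hne] at this
            · rintro ⟨hv, h⟩ i hi
              by_cases hne : i = τ
              · subst hne; simp [Function.update_self, hv]
              · rw [Function.update_of_ne hne]
                have hi' : t + 1 ≤ i.1 := by
                  rcases Nat.lt_or_ge i.1 (t + 1) with h' | h'
                  · exact absurd (Fin.ext (by omega : i.1 = t)) hne
                  · exact h'
                exact h i hi'
          by_cases h : ∀ i : Fin K, t + 1 ≤ i.1 → r i = r0 i
          · rw [if_pos h, Fintype.sum_bool]
            cases hrv : r τ
            · rw [if_neg (by rw [hc]; rintro ⟨h1, -⟩; rw [hrv] at h1; exact Bool.noConfusion h1),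
                if_pos ((hc false).mpr ⟨hrv, h⟩), hprod]
              ring
            · rw [if_pos ((hc true).mpr ⟨hrv, h⟩),
                if_neg (by rw [hc]; rintro ⟨h1, -⟩; rw [hrv] at h1; exact Bool.noConfusion h1),
                hprod]
              ring
          · rw [if_neg h]
            symm
            refine Finset.sum_eq_zero (fun v _ => ?_)
            rw [if_neg]
            intro hcv
            exact h ((hc v).mp hcv).2
        rw [Finset.sum_congr rfl (fun r _ => key r), Finset.sum_comm]
        have hstep : ∀ v : Bool,
            (∑ r : Fin K → Bool,
              if (∀ i : Fin K, t ≤ i.1 → r i = Function.update r0 τ v i) then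
               (∏ i ∈ univ.filter (fun i : Fin K => i.1 < t), M.b i y r)
                 * (M.b τ y r * g r) else 0)
            = M.b τ y (Function.update r0 τ v) * g r0 := by
          intro v
          have hdep : ∀ r r' : Fin K → Bool, (∀ i : Fin K, t ≤ i.1 → r i = r' i) →
              M.b τ y r * g r = M.b τ y r' * g r' := by
            intro r r' h
            have hb : M.b τ y r = M.b τ y r' := by
              refine M.b_local τ y r y r' (h τ (le_refl t)) (fun j _ _ => rfl) ?_
              intro j hj _
              have hj' : t < j.1 := hj
              simp only [obs]
              rw [h j (by omega)]
            rw [hb, hg r r' (fun i hi => h i (by omega))]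
          rw [ih (fun r => M.b τ y r * g r) hdep (Function.update r0 τ v)]
          have hgu : g (Function.update r0 τ v) = g r0 := by
            refine hg _ _ (fun i hi => ?_)
            refine Function.update_of_ne ?_ _ _
            intro e; subst e; simp only [hτdef] at hi; omega
          rw [hgu]
        rw [Finset.sum_congr rfl (fun v _ => hstep v), ← Finset.sum_mul,
          M.b_pmf τ y r0, one_mul]

lemma sum_b_one (M : Markov K m) (y : Fin K → Bool) :
    (∑ r : Fin K → Bool, ∏ i, M.b i y r) = 1 := by
  have h := MG M y K (fun _ => (1 : ℝ)) (fun _ _ _ => rfl) (fun _ => false)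
  simp only [mul_one] at h
  rw [← h]
  refine Finset.sum_congr rfl (fun r _ => ?_)
  rw [if_pos (fun (i : Fin K) hi => absurd i.2 (by omega))]
  refine Finset.prod_congr ?_ (fun _ _ => rfl)
  ext i; simp [i.2]

lemma sum_b_tail (M : Markov K m) (y : Fin K → Bool) (t : ℕ) (r0 : Fin K → Bool) :
    (∑ r : Fin K → Bool,
        if (∀ i : Fin K, t ≤ i.1 → r i = r0 i) then ∏ i, M.b i y r else 0)
    = ∏ i ∈ univ.filter (fun i : Fin K => t ≤ i.1), M.b i y r0 := by
  have hdep : ∀ r r' : Fin K → Bool, (∀ i : Fin K, t ≤ i.1 → r i = r' i) →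
      (∏ i ∈ univ.filter (fun i : Fin K => t ≤ i.1), M.b i y r)
        = ∏ i ∈ univ.filter (fun i : Fin K => t ≤ i.1), M.b i y r' := by
    intro r r' h
    refine Finset.prod_congr rfl (fun i hi => ?_)
    simp only [mem_filter, mem_univ, true_and] at hi
    refine M.b_local i y r y r' (h i hi) (fun j _ _ => rfl) ?_
    intro j hj _
    simp only [obs]
    rw [h j (by omega)]
  rw [← MG M y t _ hdep r0]
  refine Finset.sum_congr rfl (fun r _ => ?_)
  by_cases h : ∀ i : Fin K, t ≤ i.1 → r i = r0 i
  · rw [if_pos h, if_pos h,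
      ← Finset.prod_filter_mul_prod_filter_not univ (fun i : Fin K => i.1 < t)
        (fun i => M.b i y r)]
    congr 1
    refine Finset.prod_congr ?_ (fun _ _ => rfl)
    ext i; simp [not_lt]
  · rw [if_neg h, if_neg h]

/-- Anchors: functions pinned to `false` below `t` and to `r0` on positions `t ≤ i ≤ u`. -/
def anchorSet (t u : ℕ) (r0 : Fin K → Bool) : Finset (Fin K → Bool) :=
  univ.filter (fun r' => (∀ i : Fin K, i.1 < t → r' i = false) ∧
    (∀ i : Fin K, t ≤ i.1 → i.1 ≤ u → r' i = r0 i))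

lemma anchor_nonempty (t u : ℕ) (r0 : Fin K → Bool) : (anchorSet (K := K) t u r0).Nonempty := by
  refine ⟨fun i => if t ≤ i.1 then (if i.1 ≤ u then r0 i else false) else false, ?_⟩
  simp only [anchorSet, mem_filter, mem_univ, true_and]
  constructor
  · intro i hi; rw [if_neg (by omega)]
  · intro i h1 h2; rw [if_pos h1, if_pos h2]

lemma interval_partition (t u : ℕ) (r0 : Fin K → Bool) (f : (Fin K → Bool) → ℝ)
    (r : Fin K → Bool) :
    (if (∀ i : Fin K, t ≤ i.1 → i.1 ≤ u → r i = r0 i) then f r else 0)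
    = ∑ r' ∈ anchorSet t u r0, (if (∀ i : Fin K, t ≤ i.1 → r i = r' i) then f r else 0) := by
  by_cases h : ∀ i : Fin K, t ≤ i.1 → i.1 ≤ u → r i = r0 i
  · rw [if_pos h]
    set w : Fin K → Bool := fun i => if t ≤ i.1 then r i else false with hw
    have hwmem : w ∈ anchorSet t u r0 := by
      simp only [anchorSet, mem_filter, mem_univ, true_and]
      constructor
      · intro i hi; simp only [hw]; rw [if_neg (by omega)]
      · intro i h1 h2; simp only [hw]; rw [if_pos h1]; exact h i h1 h2
    rw [Finset.sum_eq_single_of_mem w hwmem]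
    · rw [if_pos (fun i hi => by simp only [hw]; rw [if_pos hi])]
    · intro r'' hmem hne
      rw [if_neg]
      intro hmatch
      apply hne
      simp only [anchorSet, mem_filter, mem_univ, true_and] at hmem
      funext i
      by_cases hi : t ≤ i.1
      · rw [← hmatch i hi]; simp only [hw]; rw [if_pos hi]
      · rw [hmem.1 i (by omega)]; simp only [hw]; rw [if_neg hi]
  · rw [if_neg h]
    symm
    refine Finset.sum_eq_zero (fun r' hr' => ?_)
    simp only [anchorSet, mem_filter, mem_univ, true_and] at hr'
    rw [if_neg]
    intro hmatch
    exact h (fun i h1 h2 => by rw [hmatch i h1]; exact hr'.2 i h1 h2)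

lemma sum_b_interval (M : Markov K m) (y : Fin K → Bool) (t u : ℕ) (r0 : Fin K → Bool) :
    (∑ r : Fin K → Bool,
        if (∀ i : Fin K, t ≤ i.1 → i.1 ≤ u → r i = r0 i) then ∏ i, M.b i y r else 0)
    = ∑ r' ∈ anchorSet t u r0, ∏ i ∈ univ.filter (fun i : Fin K => t ≤ i.1), M.b i y r' := by
  rw [Finset.sum_congr rfl
    (fun r _ => interval_partition t u r0 (fun r => ∏ i, M.b i y r) r), Finset.sum_comm]
  exact Finset.sum_congr rfl (fun r' _ => sum_b_tail M y t r')

lemma anchor_extract (M : Markov K m) (y : Fin K → Bool) (t : ℕ) (ht : t < K)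
    (r0 : Fin K → Bool) :
    (∑ r' ∈ anchorSet t (t + m) r0,
        ∏ i ∈ univ.filter (fun i : Fin K => t ≤ i.1), M.b i y r')
    = M.b ⟨t, ht⟩ y r0 *
      ∑ r' ∈ anchorSet (t + 1) (t + m) r0,
        ∏ i ∈ univ.filter (fun i : Fin K => t + 1 ≤ i.1), M.b i y r' := by
  set τ : Fin K := ⟨t, ht⟩ with hτdef
  have hτnot : τ ∉ univ.filter (fun i : Fin K => t + 1 ≤ i.1) := by
    simp [hτdef]
  have hins : univ.filter (fun i : Fin K => t ≤ i.1)
      = insert τ (univ.filter (fun i : Fin K => t + 1 ≤ i.1)) := by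
    ext i
    simp only [mem_filter, mem_univ, true_and, mem_insert]
    constructor
    · intro h
      rcases Nat.eq_or_lt_of_le h with h | h
      · exact Or.inl (Fin.ext h.symm)
      · exact Or.inr h
    · rintro (rfl | h)
      · exact Nat.le_refl t
      · omega
  have step1 : ∀ r' ∈ anchorSet t (t + m) r0,
      (∏ i ∈ univ.filter (fun i : Fin K => t ≤ i.1), M.b i y r')
      = M.b τ y r0 * ∏ i ∈ univ.filter (fun i : Fin K => t + 1 ≤ i.1), M.b i y r' := by
    intro r' hr'
    simp only [anchorSet, mem_filter, mem_univ, true_and] at hr'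
    rw [hins, Finset.prod_insert hτnot]
    congr 1
    refine M.b_local τ y r' y r0 (hr'.2 τ (Nat.le_refl t) (by simp [hτdef])) (fun j _ _ => rfl) ?_
    intro j hj1 hj2
    have hj1' : t < j.1 := hj1
    have hj2' : j.1 + 1 ≤ t + 1 + m := hj2
    simp only [obs]
    rw [hr'.2 j (by omega) (by omega)]
  rw [Finset.sum_congr rfl step1, ← Finset.mul_sum]
  congr 1
  refine Finset.sum_nbij' (fun r' => Function.update r' τ false)
    (fun r' => Function.update r' τ (r0 τ)) ?_ ?_ ?_ ?_ ?_
  · intro r' hr'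
    simp only [anchorSet, mem_filter, mem_univ, true_and] at hr' ⊢
    constructor
    · intro i hi
      by_cases he : i = τ
      · subst he; rw [Function.update_self]
      · rw [Function.update_of_ne he]; exact hr'.1 i (by
          have : i.1 ≠ t := fun e => he (Fin.ext e)
          omega)
    · intro i h1 h2
      have he : i ≠ τ := by
        intro e; subst e; simp only [hτdef] at h1; omega
      rw [Function.update_of_ne he]; exact hr'.2 i (by omega) h2
  · intro r' hr'
    simp only [anchorSet, mem_filter, mem_univ, true_and] at hr' ⊢
    constructor
    · intro i hi
      have he : i ≠ τ := by
        intro e; subst e; simp only [hτdef] at hi; omega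
      rw [Function.update_of_ne he]; exact hr'.1 i (by omega)
    · intro i h1 h2
      by_cases he : i = τ
      · subst he; rw [Function.update_self]
      · rw [Function.update_of_ne he]
        refine hr'.2 i ?_ h2
        have : i.1 ≠ t := fun e => he (Fin.ext e)
        omega
  · intro r' hr'
    simp only [anchorSet, mem_filter, mem_univ, true_and] at hr'
    funext i
    by_cases he : i = τ
    · subst he
      rw [Function.update_self]
      exact (hr'.2 τ (Nat.le_refl t) (by simp [hτdef])).symm
    · rw [Function.update_of_ne he, Function.update_of_ne he]
  · intro r' hr'
    simp only [anchorSet, mem_filter, mem_univ, true_and] at hr'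
    funext i
    by_cases he : i = τ
    · subst he
      rw [Function.update_self]
      exact (hr'.1 τ (by simp [hτdef])).symm
    · rw [Function.update_of_ne he, Function.update_of_ne he]
  · intro r' hr'
    refine Finset.prod_congr rfl (fun i hi => ?_)
    simp only [mem_filter, mem_univ, true_and] at hi
    have hiτ : i ≠ τ := by
      intro e; subst e; simp only [hτdef] at hi; omega
    refine M.b_local i y r' y (Function.update r' τ false)
      (by rw [Function.update_of_ne hiτ]) (fun j _ _ => rfl) ?_
    intro j hj _
    have hjτ : j ≠ τ := by
      intro e
      rw [e] at hj
      have h2 : i.1 < t := hj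
      omega
    simp only [obs]
    rw [Function.update_of_ne hjτ]

lemma anchor_update (t u : ℕ) (τ : Fin K) (hτ : τ.1 < t) (v : Bool) (r0 : Fin K → Bool) :
    anchorSet t u (Function.update r0 τ v) = anchorSet t u r0 := by
  unfold anchorSet
  ext r'
  simp only [mem_filter, mem_univ, true_and]
  constructor <;> rintro ⟨h1, h2⟩ <;> refine ⟨h1, fun i hi1 hi2 => ?_⟩
  · rw [h2 i hi1 hi2, Function.update_of_ne (fun e => by subst e; omega)]
  · rw [h2 i hi1 hi2, Function.update_of_ne (fun e => by subst e; omega)]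
lemma bool_obs_iff (b1 b2 x1 x2 : Bool) :
    ((if b1 then some x1 else none) = (if b2 then some x2 else (none : Option Bool)))
      ↔ (b1 = b2 ∧ (b2 = true → x1 = x2)) := by
  cases b1 <;> cases b2 <;> simp

/-- Factorizing `Pr` of an event of the form `Ey y ∧ Er r`. -/
lemma Pr_factor (M : Markov K m) (E : (Fin K → Bool) → (Fin K → Bool) → Prop)
    (Ey : (Fin K → Bool) → Prop) (Er : (Fin K → Bool) → Prop)
    (hE : ∀ y r, E y r ↔ (Ey y ∧ Er r)) :
    Pr M.p E = ∑ y : Fin K → Bool,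
      (if Ey y then (∏ i, M.a i y) *
        (∑ r : Fin K → Bool, if Er r then ∏ i, M.b i y r else 0) else 0) := by
  unfold Pr
  refine Finset.sum_congr rfl (fun y _ => ?_)
  by_cases hy : Ey y
  · rw [if_pos hy, Finset.mul_sum]
    refine Finset.sum_congr rfl (fun r _ => ?_)
    by_cases hr : Er r
    · rw [if_pos ((hE y r).mpr ⟨hy, hr⟩), if_pos hr, M.factor, Finset.prod_mul_distrib]
    · rw [if_neg (fun h => hr ((hE y r).mp h).2), if_neg hr, mul_zero]
  · rw [if_neg hy]
    refine Finset.sum_eq_zero (fun r _ => ?_)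
    rw [if_neg (fun h => hy ((hE y r).mp h).1)]

/-- Congruence for sums of indicators, robust to `Decidable` instance mismatches. -/
lemma sum_if_congr {α : Type*} [Fintype α] (P Q : α → Prop) [∀ x, Decidable (Q x)]
    (f : α → ℝ) (h : ∀ x, P x ↔ Q x) :
    (∑ x : α, if P x then f x else 0) = ∑ x : α, if Q x then f x else 0 :=
  Finset.sum_congr rfl (fun x _ => if_congr (h x) rfl rfl)

/-- Evaluation of the left-hand side conditional probability. -/
lemma lhs_eval (M : Markov K m) (k : ℕ) (hk : k + m + 2 ≤ K) (yv rv : ℕ → Bool) :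
    cPr M.p (Req (k + m + 2) K rv) (Yeq k K yv)
      = ∏ i ∈ univ.filter (fun i : Fin K => k + m + 1 ≤ i.1),
          M.b i (fun i : Fin K => yv (i.1 + 1)) (fun i : Fin K => rv (i.1 + 1)) := by
  set ty : Fin K → Bool := fun i => yv (i.1 + 1) with hty
  set tr : Fin K → Bool := fun i => rv (i.1 + 1) with htr
  obtain ⟨Ey, hEy⟩ : ∃ P : (Fin K → Bool) → Prop,
      P = fun y => ∀ i : Fin K, k ≤ i.1 + 1 → y i = ty i := ⟨_, rfl⟩
  obtain ⟨Er1, hEr1⟩ : ∃ P : (Fin K → Bool) → Prop,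
      P = fun r => ∀ i : Fin K, k + m + 1 ≤ i.1 → r i = tr i := ⟨_, rfl⟩
  obtain ⟨Er2, hEr2⟩ : ∃ P : (Fin K → Bool) → Prop, P = fun _ => True := ⟨_, rfl⟩
  have hE1 : ∀ y r : Fin K → Bool,
      ((Req (k + m + 2) K rv y r ∧ Yeq k K yv y r)) ↔ (Ey y ∧ Er1 r) := by
    intro y r
    simp only [hEy, hEr1]
    constructor
    · rintro ⟨hR, hY⟩
      exact ⟨fun i hi => hY i hi (by have := i.2; omega),
        fun i hi => hR i (by omega) (by have := i.2; omega)⟩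
    · rintro ⟨hy, hr⟩
      exact ⟨fun i h1 _ => hr i (by omega), fun i h1 _ => hy i h1⟩
  have hE2 : ∀ y r : Fin K → Bool, Yeq k K yv y r ↔ (Ey y ∧ Er2 r) := by
    intro y r
    simp only [hEy, hEr2]
    constructor
    · intro hY
      exact ⟨fun i hi => hY i hi (by have := i.2; omega), trivial⟩
    · rintro ⟨hy, -⟩
      exact fun i h1 _ => hy i h1
  unfold cPr
  rw [Pr_factor M _ _ _ hE1, Pr_factor M _ _ _ hE2]
  have hC : ∀ y : Fin K → Bool, (∀ i : Fin K, k ≤ i.1 + 1 → y i = ty i) →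
      (∏ i ∈ univ.filter (fun i : Fin K => k + m + 1 ≤ i.1), M.b i y tr)
        = ∏ i ∈ univ.filter (fun i : Fin K => k + m + 1 ≤ i.1), M.b i ty tr := by
    intro y hy
    refine Finset.prod_congr rfl (fun i hi => ?_)
    simp only [mem_filter, mem_univ, true_and] at hi
    refine M.b_local i y tr ty tr rfl ?_ ?_
    · intro l h1 h2
      exact hy l (by omega)
    · intro l hl1 hl2
      simp only [obs]
      rw [hy l (by omega)]
  have hnum : ∀ y : Fin K → Bool,
      (if Ey y then (∏ i, M.a i y) *
        (∑ r : Fin K → Bool, if Er1 r then ∏ i, M.b i y r else 0) else 0)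
      = (∏ i ∈ univ.filter (fun i : Fin K => k + m + 1 ≤ i.1), M.b i ty tr)
        * (if Ey y then (∏ i, M.a i y) else 0) := by
    intro y
    by_cases hy : Ey y
    · rw [if_pos hy, if_pos hy,
        sum_if_congr Er1 (fun r => ∀ i : Fin K, k + m + 1 ≤ i.1 → r i = tr i)
          (fun r => ∏ i, M.b i y r) (fun r => iff_of_eq (congrFun hEr1 r)),
        sum_b_tail M y (k + m + 1) tr]
      simp only [hEy] at hy
      rw [hC y hy]
      ring
    · rw [if_neg hy, if_neg hy, mul_zero]
  have hden : ∀ y : Fin K → Bool,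
      (if Ey y then (∏ i, M.a i y) *
        (∑ r : Fin K → Bool, if Er2 r then ∏ i, M.b i y r else 0) else 0)
      = (if Ey y then (∏ i, M.a i y) else 0) := by
    intro y
    have hS : (∑ r : Fin K → Bool, if Er2 r then ∏ i, M.b i y r else 0) = 1 := by
      rw [Finset.sum_congr rfl
        (fun r _ => if_pos (show Er2 r by rw [hEr2]; trivial))]
      exact sum_b_one M y
    by_cases hy : Ey y
    · rw [if_pos hy, if_pos hy, hS, mul_one]
    · rw [if_neg hy, if_neg hy]
  have H1 := Finset.sum_congr (rfl : (univ : Finset (Fin K → Bool)) = univ)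
    (fun y _ => hnum y)
  have H2 := Finset.sum_congr (rfl : (univ : Finset (Fin K → Bool)) = univ)
    (fun y _ => hden y)
  rw [H1, H2, ← Finset.mul_sum]
  have hDpos : 0 < ∑ y : Fin K → Bool, (if Ey y then (∏ i, M.a i y) else 0) := by
    refine Finset.sum_pos' (fun y _ => ?_) ⟨ty, mem_univ ty, ?_⟩
    · by_cases hy : Ey y
      · rw [if_pos hy]; exact le_of_lt (Finset.prod_pos (fun i _ => M.a_pos i y))
      · rw [if_neg hy]
    · rw [if_pos (show Ey ty by rw [hEy]; exact fun i _ => rfl)]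
      exact Finset.prod_pos (fun i _ => M.a_pos i ty)
  rw [mul_div_assoc, div_self (ne_of_gt hDpos), mul_one]

/-- Evaluation of one factor of the right-hand side. -/
lemma factor_eval (M : Markov K m) (j : ℕ) (τ : Fin K) (hτ : τ.1 + 1 = j)
    (hjm : m + 2 ≤ j) (yv rv : ℕ → Bool) :
    cPr M.p (Req j j rv)
      (fun y r => Yeq (j - m) j yv y r ∧
        Oeq (j + 1) (j + m) (fun n => if rv n then some (yv n) else none) y r)
    = M.b τ (fun i : Fin K => yv (i.1 + 1)) (fun i : Fin K => rv (i.1 + 1)) := by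
  set ty : Fin K → Bool := fun i => yv (i.1 + 1) with hty
  set tr : Fin K → Bool := fun i => rv (i.1 + 1) with htr
  obtain ⟨Ey, hEy⟩ : ∃ P : (Fin K → Bool) → Prop,
      P = fun y =>
        (∀ i : Fin K, j - m ≤ i.1 + 1 → i.1 + 1 ≤ j → y i = ty i) ∧
        (∀ i : Fin K, j + 1 ≤ i.1 + 1 → i.1 + 1 ≤ j + m → rv (i.1 + 1) = true → y i = ty i)
      := ⟨_, rfl⟩
  obtain ⟨ErN, hErN⟩ : ∃ P : (Fin K → Bool) → Prop,
      P = fun r => ∀ i : Fin K, τ.1 ≤ i.1 → i.1 ≤ τ.1 + m → r i = tr i := ⟨_, rfl⟩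
  obtain ⟨ErD, hErD⟩ : ∃ P : (Fin K → Bool) → Prop,
      P = fun r => ∀ i : Fin K, τ.1 + 1 ≤ i.1 → i.1 ≤ τ.1 + m → r i = tr i := ⟨_, rfl⟩
  have hobs : ∀ (y r : Fin K → Bool) (i : Fin K),
      (obs y r i = (fun n => if rv n then some (yv n) else none) (i.1 + 1))
      ↔ (r i = tr i ∧ (rv (i.1 + 1) = true → y i = ty i)) := by
    intro y r i
    exact bool_obs_iff (r i) (rv (i.1 + 1)) (y i) (yv (i.1 + 1))
  have hEN : ∀ y r : Fin K → Bool,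
      (Req j j rv y r ∧ (Yeq (j - m) j yv y r ∧
          Oeq (j + 1) (j + m) (fun n => if rv n then some (yv n) else none) y r))
      ↔ (Ey y ∧ ErN r) := by
    intro y r
    simp only [hEy, hErN]
    constructor
    · rintro ⟨hR, hY, hO⟩
      refine ⟨⟨hY, fun i h1 h2 hrv => ((hobs y r i).mp (hO i h1 h2)).2 hrv⟩, ?_⟩
      intro i hi1 hi2
      rcases Nat.eq_or_lt_of_le hi1 with he | hlt
      · exact hR i (by omega) (by omega)
      · exact ((hobs y r i).mp (hO i (by omega) (by omega))).1
    · rintro ⟨⟨hY1, hY2⟩, hEr⟩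
      refine ⟨?_, hY1, ?_⟩
      · intro i h1 h2
        exact hEr i (by omega) (by omega)
      · intro i h1 h2
        exact (hobs y r i).mpr ⟨hEr i (by omega) (by omega), fun hrv => hY2 i h1 h2 hrv⟩
  have hED : ∀ y r : Fin K → Bool,
      (Yeq (j - m) j yv y r ∧
          Oeq (j + 1) (j + m) (fun n => if rv n then some (yv n) else none) y r)
      ↔ (Ey y ∧ ErD r) := by
    intro y r
    simp only [hEy, hErD]
    constructor
    · rintro ⟨hY, hO⟩
      refine ⟨⟨hY, fun i h1 h2 hrv => ((hobs y r i).mp (hO i h1 h2)).2 hrv⟩, ?_⟩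
      intro i hi1 hi2
      exact ((hobs y r i).mp (hO i (by omega) (by omega))).1
    · rintro ⟨⟨hY1, hY2⟩, hEr⟩
      refine ⟨hY1, ?_⟩
      intro i h1 h2
      exact (hobs y r i).mpr ⟨hEr i (by omega) (by omega), fun hrv => hY2 i h1 h2 hrv⟩
  unfold cPr
  rw [Pr_factor M _ _ _ hEN, Pr_factor M _ _ _ hED]
  have hbconst : ∀ y : Fin K → Bool,
      ((∀ i : Fin K, j - m ≤ i.1 + 1 → i.1 + 1 ≤ j → y i = ty i) ∧
       (∀ i : Fin K, j + 1 ≤ i.1 + 1 → i.1 + 1 ≤ j + m → rv (i.1 + 1) = true → y i = ty i))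
      → M.b τ y tr = M.b τ ty tr := by
    intro y hy
    refine M.b_local τ y tr ty tr rfl ?_ ?_
    · intro l h1 h2
      exact hy.1 l (by omega) (by omega)
    · intro l hl1 hl2
      simp only [obs]
      cases hrl : tr l
      · rfl
      · rw [hy.2 l (by omega) (by omega) hrl]
  have hnum : ∀ y : Fin K → Bool,
      (if Ey y then (∏ i, M.a i y) *
        (∑ r : Fin K → Bool, if ErN r then ∏ i, M.b i y r else 0) else 0)
      = M.b τ ty tr * (if Ey y then (∏ i, M.a i y) *
          (∑ r' ∈ anchorSet (τ.1 + 1) (τ.1 + m) tr,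
            ∏ i ∈ univ.filter (fun i : Fin K => τ.1 + 1 ≤ i.1), M.b i y r') else 0) := by
    intro y
    by_cases hy : Ey y
    · rw [if_pos hy, if_pos hy,
        sum_if_congr ErN (fun r => ∀ i : Fin K, τ.1 ≤ i.1 → i.1 ≤ τ.1 + m → r i = tr i)
          (fun r => ∏ i, M.b i y r) (fun r => iff_of_eq (congrFun hErN r)),
        sum_b_interval M y τ.1 (τ.1 + m) tr]
      have hext : (∑ r' ∈ anchorSet τ.1 (τ.1 + m) tr,
          ∏ i ∈ univ.filter (fun i : Fin K => τ.1 ≤ i.1), M.b i y r')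
          = M.b τ y tr * ∑ r' ∈ anchorSet (τ.1 + 1) (τ.1 + m) tr,
            ∏ i ∈ univ.filter (fun i : Fin K => τ.1 + 1 ≤ i.1), M.b i y r' := by
        have h := anchor_extract M y τ.1 τ.2 tr
        rwa [Fin.eta] at h
      simp only [hEy] at hy
      rw [hext, hbconst y hy]
      ring
    · rw [if_neg hy, if_neg hy, mul_zero]
  have hden : ∀ y : Fin K → Bool,
      (if Ey y then (∏ i, M.a i y) *
        (∑ r : Fin K → Bool, if ErD r then ∏ i, M.b i y r else 0) else 0)
      = (if Ey y then (∏ i, M.a i y) *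
          (∑ r' ∈ anchorSet (τ.1 + 1) (τ.1 + m) tr,
            ∏ i ∈ univ.filter (fun i : Fin K => τ.1 + 1 ≤ i.1), M.b i y r') else 0) := by
    intro y
    by_cases hy : Ey y
    · rw [if_pos hy, if_pos hy,
        sum_if_congr ErD (fun r => ∀ i : Fin K, τ.1 + 1 ≤ i.1 → i.1 ≤ τ.1 + m → r i = tr i)
          (fun r => ∏ i, M.b i y r) (fun r => iff_of_eq (congrFun hErD r)),
        sum_b_interval M y (τ.1 + 1) (τ.1 + m) tr]
    · rw [if_neg hy, if_neg hy]
  have H1 := Finset.sum_congr (rfl : (univ : Finset (Fin K → Bool)) = univ)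
    (fun y _ => hnum y)
  have H2 := Finset.sum_congr (rfl : (univ : Finset (Fin K → Bool)) = univ)
    (fun y _ => hden y)
  rw [H1, H2, ← Finset.mul_sum]
  have hSpos : 0 < ∑ y : Fin K → Bool,
      (if Ey y then (∏ i, M.a i y) *
        (∑ r' ∈ anchorSet (τ.1 + 1) (τ.1 + m) tr,
          ∏ i ∈ univ.filter (fun i : Fin K => τ.1 + 1 ≤ i.1), M.b i y r') else 0) := by
    have hT : ∀ y : Fin K → Bool, 0 < (∑ r' ∈ anchorSet (τ.1 + 1) (τ.1 + m) tr,
        ∏ i ∈ univ.filter (fun i : Fin K => τ.1 + 1 ≤ i.1), M.b i y r') :=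
      fun y => Finset.sum_pos
        (fun r' _ => Finset.prod_pos (fun i _ => M.b_pos i y r'))
        (anchor_nonempty (τ.1 + 1) (τ.1 + m) tr)
    refine Finset.sum_pos' (fun y _ => ?_) ⟨ty, mem_univ ty, ?_⟩
    · by_cases hy : Ey y
      · rw [if_pos hy]
        exact le_of_lt (mul_pos (Finset.prod_pos (fun i _ => M.a_pos i y)) (hT y))
      · rw [if_neg hy]
    · rw [if_pos (show Ey ty by
        rw [hEy]; exact ⟨fun i _ _ => rfl, fun i _ _ _ => rfl⟩)]
      exact mul_pos (Finset.prod_pos (fun i _ => M.a_pos i ty)) (hT ty)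
  rw [mul_div_assoc, div_self (ne_of_gt hSpos), mul_one]

/-- Block factorization of the tail response indicators.  Under the
`m`th-order Markov model, for every integer `k ≥ 1` with `k + m + 2 ≤ K` and all values of
the variables,
`f(R̲_{k+m+1} | Y̲_{k−1}) = ∏_{j=k+m+2}^{K} f(Rⱼ | Ȳ^{m+1}_{j+1}, O̲ᵐⱼ)`,
where the `O`-arguments in each factor are determined by the conditioning outcome values
and the other `R`-entries of the block, via `Oⱼ = (rv j, yv j)`. -/
theorem statement11 (K m : ℕ) (hm : 1 ≤ m) (hKm : 2 * m + 1 < K) (M : Markov K m)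
    (k : ℕ) (hk1 : 1 ≤ k) (hk2 : k + m + 2 ≤ K)
    (yv : ℕ → Bool) (rv : ℕ → Bool) :
    cPr M.p (Req (k + m + 2) K rv) (Yeq k K yv)
      = ∏ j ∈ Finset.Icc (k + m + 2) K,
          cPr M.p (Req j j rv)
            (fun y r => Yeq (j - m) j yv y r ∧
              Oeq (j + 1) (j + m) (fun n => if rv n then some (yv n) else none) y r) := by
  rw [lhs_eval M k hk2 yv rv]
  have hfac : ∀ j ∈ Finset.Icc (k + m + 2) K,
      cPr M.p (Req j j rv)
        (fun y r => Yeq (j - m) j yv y r ∧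
          Oeq (j + 1) (j + m) (fun n => if rv n then some (yv n) else none) y r)
      = (if h : j - 1 < K then
          M.b ⟨j - 1, h⟩ (fun i : Fin K => yv (i.1 + 1)) (fun i : Fin K => rv (i.1 + 1))
          else 1) := by
    intro j hj
    simp only [Finset.mem_Icc] at hj
    have hjK : j - 1 < K := by omega
    have hτ1 : (⟨j - 1, hjK⟩ : Fin K).1 + 1 = j := by
      show j - 1 + 1 = j
      omega
    rw [factor_eval M j ⟨j - 1, hjK⟩ hτ1 (by omega) yv rv, dif_pos hjK]
  rw [Finset.prod_congr rfl hfac]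
  refine Finset.prod_bij (fun (a : Fin K) (_ : a ∈ univ.filter
      (fun i : Fin K => k + m + 1 ≤ i.1)) => a.1 + 1) ?_ ?_ ?_ ?_
  · intro a ha
    simp only [mem_filter, mem_univ, true_and] at ha
    simp only [Finset.mem_Icc]
    have := a.2
    omega
  · intro a₁ h₁ a₂ h₂ he
    have he' : a₁.1 + 1 = a₂.1 + 1 := he
    exact Fin.ext (by omega)
  · intro n hn
    simp only [Finset.mem_Icc] at hn
    refine ⟨⟨n - 1, by omega⟩, ?_, ?_⟩
    · simp only [mem_filter, mem_univ, true_and]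
      show k + m + 1 ≤ n - 1
      omega
    · show n - 1 + 1 = n
      omega
  · intro a ha
    have hlt : a.1 + 1 - 1 < K := by
      have := a.2
      omega
    rw [dif_pos hlt]
    have he : (⟨a.1 + 1 - 1, hlt⟩ : Fin K) = a := Fin.ext (by
      show a.1 + 1 - 1 = a.1
      omega)
    rw [he]

end MRM
end

section
/- (Block factorization of the middle response indicators.) Under the mth-order Markov model, for every integer k with m < k < K − m − 1 and all values of the variables, f(R̲^{m+1}_{k−1} | Ȳ^{2m+1}_{k+m+1}, O̲_{k+m}) = ∏_{j=k}^{k+m} f(Rⱼ | Ȳ^{m+1}_{j+1}, O̲ᵐⱼ), i.e., the conditional pmf of the block (R_k,…,R_{k+m}) given (Y_{k−m},…,Y_{k+m}, O_{k+m+1},…,O_K) equals the product over j of the conditional pmfs of Rⱼ given (Y_{j−m},…,Yⱼ, O_{j+1},…,O_{j+m}), where the O-arguments in each factor are determined by the conditioning values and the other R-entries in the block. -/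
/-!
Under the Markov factorisation `p(y, r) = ∏ₖ aₖ(y) bₖ(y, r)`, each `bₖ(y, ·)` is a pmf in `rₖ`
that depends only on `rₖ` and on later response indicators. Summing over `r` from the first index
upwards, every factor below a block of conditioned indicators sums to one, the factors of the
block are constant on the conditioning event (all their arguments are fixed by it), and what is
left after the block is the same in numerator and denominator. Hence each conditional probability
in the statement is the product of the `bⱼ` over its block, evaluated at any point of its event,
and a single point lies in all the events involved.
-/

open scoped Classical BigOperators

section Marginalization

open Finset Function

variable {ι α R : Type*} [Fintype α] [DecidableEq α]

theorem Fintype.sum_eq_sum_ite_sum_update [Fintype ι] [DecidableEq ι] [AddCommMonoid R]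
    (τ : ι) (v₀ : α) (F : (ι → α) → R) :
    ∑ r, F r = ∑ r, if r τ = v₀ then ∑ v, F (update r τ v) else 0 := by
  have slice (v : α) :
      ∑ r with r τ = v, F r = ∑ r with r τ = v₀, F (update r τ v) :=
    Finset.sum_nbij' (update · τ v₀) (update · τ v) (by simp) (by simp)
      (fun r hr => by simp_all) (fun r hr => by simp_all)
      (fun r hr => by rw [(mem_filter.1 hr).2.symm, update_idem, update_eq_self])
  rw [← Finset.sum_fiberwise univ (fun r => r τ) F, Finset.sum_congr rfl fun v _ => slice v,
    Finset.sum_comm, Finset.sum_filter]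

theorem Fintype.sum_mul_eq_sum_ite_of_dependsOn [Fintype ι] [DecidableEq ι] [CommSemiring R]
    {τ : ι} (v₀ : α) {f H : (ι → α) → R} (hf : ∀ r, ∑ v, f (update r τ v) = 1)
    (hH : DependsOn H {τ}ᶜ) :
    ∑ r, f r * H r = ∑ r, if r τ = v₀ then H r else 0 := by
  rw [sum_eq_sum_ite_sum_update τ v₀]
  refine Finset.sum_congr rfl fun r _ => if_congr Iff.rfl ?_ rfl
  have hHτ : ∀ v, H (update r τ v) = H r := fun v => hH fun j hj => update_of_ne hj _ _
  simp only [hHτ, ← sum_mul, hf, one_mul]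

/-- Integrating out the coordinates below `t` against kernels `f i`, each a probability in its
own coordinate given the later ones, leaves the coordinates below `t` pinned to arbitrary values. -/
theorem Fintype.sum_prod_lt_mul_eq_sum_ite {K : ℕ} [CommSemiring R]
    (f : Fin K → (Fin K → α) → R) (hf_dep : ∀ i, DependsOn (f i) {j | i ≤ j})
    (hf_sum : ∀ i r, ∑ v, f i (update r i v) = 1) (r₀ : Fin K → α) (t : ℕ)
    {G : (Fin K → α) → R} (hG : DependsOn G {j | t ≤ j.1}) :
    ∑ r, (∏ i with i.1 < t, f i r) * G r
      = ∑ r, if ∀ i : Fin K, i.1 < t → r i = r₀ i then G r else 0 := by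
  induction t generalizing G with
  | zero => simp
  | succ t ih =>
    by_cases ht : t < K
    · set τ : Fin K := ⟨t, ht⟩
      have hsplit : (univ.filter fun i : Fin K => i.1 < t + 1)
          = insert τ (univ.filter fun i : Fin K => i.1 < t) := by
        ext i; simp only [mem_filter, mem_univ, true_and, mem_insert, Fin.ext_iff, τ]; omega
      have hτ : τ ∉ univ.filter fun i : Fin K => i.1 < t := by simp [τ]
      have hfG : DependsOn (fun r => f τ r * G r) {j | t ≤ j.1} := fun r r' h => by
        change f τ r * G r = f τ r' * G r'
        rw [hf_dep τ fun j hj => h j hj, hG fun j hj => h j (Nat.le_of_succ_le hj)]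
      have hpin : DependsOn (fun r => if ∀ i : Fin K, i.1 < t → r i = r₀ i then G r else 0)
          {τ}ᶜ := fun r r' h => by
        have hlt : ∀ i : Fin K, i.1 < t → r i = r' i := fun i hi =>
          h i (by simp only [Set.mem_compl_iff, Set.mem_singleton_iff, Fin.ext_iff, τ]; omega)
        refine if_congr (forall_congr' fun i => imp_congr_right fun hi => by rw [hlt i hi])
          (hG fun j hj => h j fun e => by
            rw [Set.mem_singleton_iff.1 e] at hj; exact Nat.not_succ_le_self t hj) rfl
      calc ∑ r, (∏ i with i.1 < t + 1, f i r) * G r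
          = ∑ r, (∏ i with i.1 < t, f i r) * (f τ r * G r) := by
            simp only [hsplit, prod_insert hτ, mul_assoc, mul_left_comm]
        _ = ∑ r, f τ r * if ∀ i : Fin K, i.1 < t → r i = r₀ i then G r else 0 := by
            rw [ih hfG]; simp only [mul_ite, mul_zero]
        _ = _ := by
            rw [sum_mul_eq_sum_ite_of_dependsOn (r₀ τ) (hf_sum τ) hpin]
            refine Finset.sum_congr rfl fun r _ => ?_
            rw [← ite_and]
            refine if_congr ⟨fun ⟨hτ, hlt⟩ i hi => ?_, fun h => ⟨h τ t.lt_succ_self,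
              fun i hi => h i (by omega)⟩⟩ rfl rfl
            rcases Nat.lt_succ_iff_lt_or_eq.1 hi with hi | hi
            · exact hlt i hi
            · exact (Fin.ext hi : i = τ) ▸ hτ
    · have hlt : ∀ i : Fin K, i.1 < t + 1 ↔ i.1 < t := fun i => by omega
      simp only [hlt]
      exact ih (hG.mono fun _ => Nat.le_of_succ_le)

theorem Fin.prod_lt_mul_prod_ge {K : ℕ} [CommMonoid R] (f : Fin K → R) (t : ℕ) :
    (∏ i with i.1 < t, f i) * ∏ i with t ≤ i.1, f i = ∏ i, f i := by
  simpa only [not_lt] using prod_filter_mul_prod_filter_not univ (fun i : Fin K => i.1 < t) f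

theorem Fin.prod_eq_prod_lt_mul_prod_Icc_mul_prod_ge {K : ℕ} [CommMonoid R] (f : Fin K → R)
    {lo hi : ℕ} (hlh : lo ≤ hi) :
    ∏ i, f i = (∏ i with i.1 < lo - 1, f i) * (∏ i with i.1 + 1 ∈ Icc lo hi, f i)
      * ∏ i with hi ≤ i.1, f i := by
  rw [← Fin.prod_lt_mul_prod_ge f hi, ← prod_filter_mul_prod_filter_not
    (univ.filter fun i : Fin K => i.1 < hi) (fun i => i.1 < lo - 1), filter_filter, filter_filter]
  congr 3 <;> ext i <;> simp only [mem_filter, mem_univ, true_and, mem_Icc] <;> omega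

end Marginalization

namespace MRM

open Finset Function

variable {K m : ℕ}

theorem Markov.Pr_pos (M : Markov K m) {E : (Fin K → Bool) → (Fin K → Bool) → Prop}
    {y₀ r₀ : Fin K → Bool} (h₀ : E y₀ r₀) : 0 < Pr M.p E := by
  have hp : ∀ y r, 0 < M.p y r := fun y r => by
    rw [M.factor]
    exact prod_pos fun i _ => mul_pos (M.a_pos i y) (M.b_pos i y r)
  refine sum_pos' (fun y _ => sum_nonneg fun r _ => ?_) ⟨y₀, mem_univ _,
    sum_pos' (fun r _ => ?_) ⟨r₀, mem_univ _, by simpa [h₀] using hp y₀ r₀⟩⟩ <;>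
  · split_ifs
    exacts [(hp _ _).le, le_rfl]

theorem Markov.Pr_eq_sum_prod_a_mul (M : Markov K m)
    (E : (Fin K → Bool) → (Fin K → Bool) → Prop) :
    Pr M.p E = ∑ y, (∏ i, M.a i y) * ∑ r, if E y r then ∏ i, M.b i y r else 0 := by
  simp only [Pr, M.factor, prod_mul_distrib, mul_sum, mul_ite, mul_zero]

theorem Req_dependsOn (lo hi : ℕ) (rv : ℕ → Bool) (y : Fin K → Bool) :
    DependsOn (Req lo hi rv y) {j | lo ≤ j.1 + 1} := fun r r' h =>
  propext <| forall_congr' fun j => forall_congr' fun hj => by rw [h j hj]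

theorem Oeq_dependsOn (lo hi : ℕ) (ov : ℕ → Option Bool) (y : Fin K → Bool) :
    DependsOn (Oeq lo hi ov y) {j | lo ≤ j.1 + 1} := fun r r' h =>
  propext <| forall_congr' fun j => forall_congr' fun hj => by simp only [obs, h j hj]

theorem Markov.b_dependsOn (M : Markov K m) (i : Fin K) (y : Fin K → Bool) :
    DependsOn (M.b i y) {j | i ≤ j} := fun r r' h =>
  M.b_local i y r y r' (h i (le_refl i)) (fun _ _ _ => rfl) fun j hj _ => by
    simp only [obs, h j hj.le]

theorem Markov.b_eq_of_mem_block (M : Markov K m) {lo hi top : ℕ} (htop : min (hi + m) K ≤ top)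
    {yv rv : ℕ → Bool} {ov : ℕ → Option Bool} {i : Fin K} (hmem : i.1 + 1 ∈ Icc lo hi)
    {y r y' r' : Fin K → Bool}
    (h : Req lo hi rv y r ∧ Yeq (lo - m) hi yv y r ∧ Oeq (hi + 1) top ov y r)
    (h' : Req lo hi rv y' r' ∧ Yeq (lo - m) hi yv y' r' ∧ Oeq (hi + 1) top ov y' r') :
    M.b i y r = M.b i y' r' := by
  obtain ⟨hR, hY, hO⟩ := h
  obtain ⟨hR', hY', hO'⟩ := h'
  rw [mem_Icc] at hmem
  apply M.b_local i y r y' r'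
  · rw [hR i hmem.1 hmem.2, hR' i hmem.1 hmem.2]
  · intro j hj₁ hj₂
    rw [hY j (by omega) (by omega), hY' j (by omega) (by omega)]
  · intro j hj₁ hj₂
    by_cases hjb : j.1 + 1 ≤ hi
    · simp only [obs, hR j (by omega) hjb, hR' j (by omega) hjb, hY j (by omega) hjb,
        hY' j (by omega) hjb]
    · have hjtop : j.1 + 1 ≤ top := (le_min (by omega) j.isLt).trans htop
      rw [hO j (by omega) hjtop, hO' j (by omega) hjtop]

theorem Markov.sum_Req_Oeq_eq_mul (M : Markov K m) {lo hi top : ℕ} (hlh : lo ≤ hi)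
    (htop : min (hi + m) K ≤ top) {yv rv : ℕ → Bool} {ov : ℕ → Option Bool}
    {y₀ r₀ : Fin K → Bool}
    (h₀ : Req lo hi rv y₀ r₀ ∧ Yeq (lo - m) hi yv y₀ r₀ ∧
      Oeq (hi + 1) top ov y₀ r₀)
    {y : Fin K → Bool} (hy : ∀ r, Yeq (lo - m) hi yv y r) :
    ∑ r, (if Req lo hi rv y r ∧ Oeq (hi + 1) top ov y r then ∏ i, M.b i y r else 0)
      = (∏ i with i.1 + 1 ∈ Icc lo hi, M.b i y₀ r₀)
        * ∑ r, if Oeq (hi + 1) top ov y r then ∏ i, M.b i y r else 0 := by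
  set c := ∏ i with i.1 + 1 ∈ Icc lo hi, M.b i y₀ r₀
  set L : (Fin K → Bool) → ℝ := fun r =>
    if Oeq (hi + 1) top ov y r then ∏ i with hi ≤ i.1, M.b i y r else 0
  have hL : DependsOn L {j | hi ≤ j.1} := fun r r' h => by
    have hO := Oeq_dependsOn (hi + 1) top ov y fun j hj => h j (Nat.le_of_add_le_add_right hj)
    refine if_congr hO.to_iff (prod_congr rfl fun i hi => M.b_dependsOn i y fun j hj => h j ?_) rfl
    exact (mem_filter.1 hi).2.trans hj
  have hR : DependsOn (Req lo hi rv y) {j | lo - 1 ≤ j.1} :=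
    (Req_dependsOn lo hi rv y).mono fun _ => Nat.sub_le_of_le_add
  have pinned : ∀ r, ((∀ i : Fin K, i.1 < lo - 1 → r i = r₀ i) ∧ Req lo hi rv y r)
      ↔ ∀ i : Fin K, i.1 < hi → r i = r₀ i := fun r => by
    constructor
    · rintro ⟨hlt, hr⟩ i hi
      by_cases hi' : i.1 < lo - 1
      · exact hlt i hi'
      · rw [hr i (by omega) (by omega), h₀.1 i (by omega) (by omega)]
    · intro h
      refine ⟨fun i hi => h i (by omega), fun i h₁ h₂ => ?_⟩
      rw [h i (by omega), h₀.1 i h₁ h₂]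
  have hblock : ∀ r, Req lo hi rv y r → Oeq (hi + 1) top ov y r →
      ∏ i with i.1 + 1 ∈ Icc lo hi, M.b i y r = c := fun r hr ho =>
    prod_congr rfl fun i hi => M.b_eq_of_mem_block htop (mem_filter.1 hi).2 ⟨hr, hy r, ho⟩ h₀
  calc ∑ r, (if Req lo hi rv y r ∧ Oeq (hi + 1) top ov y r then ∏ i, M.b i y r else 0)
      = ∑ r, (∏ i with i.1 < lo - 1, M.b i y r)
          * (c * if Req lo hi rv y r then L r else 0) := by
        refine Finset.sum_congr rfl fun r _ => ?_
        by_cases hr : Req lo hi rv y r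
        · by_cases ho : Oeq (hi + 1) top ov y r
          · simp only [hr, ho, and_self, if_true, L, hblock r hr ho, mul_assoc,
              Fin.prod_eq_prod_lt_mul_prod_Icc_mul_prod_ge _ hlh]
          · simp [hr, ho, L]
        · simp [hr]
    _ = ∑ r, if ∀ i : Fin K, i.1 < lo - 1 → r i = r₀ i
          then c * (if Req lo hi rv y r then L r else 0) else 0 :=
        Fintype.sum_prod_lt_mul_eq_sum_ite (M.b · y) (M.b_dependsOn · y) (M.b_pmf · y) r₀ _
          fun r r' h => by
            simp only [hR h, hL fun j hj => h j ((Nat.sub_le lo 1).trans (hlh.trans hj))]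
    _ = c * ∑ r, if ∀ i : Fin K, i.1 < hi → r i = r₀ i then L r else 0 := by
        rw [mul_sum]
        refine Finset.sum_congr rfl fun r _ => ?_
        simp only [mul_ite, mul_zero, ← ite_and, pinned]
    _ = _ := by
        rw [← Fintype.sum_prod_lt_mul_eq_sum_ite (M.b · y) (M.b_dependsOn · y) (M.b_pmf · y)
          r₀ _ hL]
        simp only [L, mul_ite, mul_zero, Fin.prod_lt_mul_prod_ge]

theorem Markov.cPr_Req_eq_prod_b (M : Markov K m) {lo hi top : ℕ} (hlh : lo ≤ hi)
    (htop : min (hi + m) K ≤ top) {yv rv : ℕ → Bool} {ov : ℕ → Option Bool}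
    {y₀ r₀ : Fin K → Bool}
    (h₀ : Req lo hi rv y₀ r₀ ∧ Yeq (lo - m) hi yv y₀ r₀ ∧
      Oeq (hi + 1) top ov y₀ r₀) :
    cPr M.p (Req lo hi rv) (fun y r => Yeq (lo - m) hi yv y r ∧ Oeq (hi + 1) top ov y r)
      = ∏ i with i.1 + 1 ∈ Icc lo hi, M.b i y₀ r₀ := by
  have hnum : Pr M.p (fun y r =>
        Req lo hi rv y r ∧ Yeq (lo - m) hi yv y r ∧ Oeq (hi + 1) top ov y r)
      = (∏ i with i.1 + 1 ∈ Icc lo hi, M.b i y₀ r₀)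
        * Pr M.p (fun y r => Yeq (lo - m) hi yv y r ∧ Oeq (hi + 1) top ov y r) := by
    rw [M.Pr_eq_sum_prod_a_mul, M.Pr_eq_sum_prod_a_mul, mul_sum]
    refine Finset.sum_congr rfl fun y _ => ?_
    by_cases hy : ∀ r, Yeq (lo - m) hi yv y r
    · simp only [hy, true_and]
      rw [M.sum_Req_Oeq_eq_mul hlh htop h₀ hy, mul_left_comm]
    · have hy' : ∀ r, ¬ Yeq (lo - m) hi yv y r := fun _ h => hy fun _ => h
      simp [hy']
  rw [cPr, hnum, mul_div_assoc, div_self (M.Pr_pos ⟨h₀.2.1, h₀.2.2⟩).ne', mul_one]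

theorem statement13_general (K m : ℕ) (M : Markov K m)
    (k : ℕ)
    (yv : ℕ → Bool) (rv : ℕ → Bool) (ov : ℕ → Option Bool) :
    cPr M.p (Req k (k + m) rv)
        (fun y r => Yeq (k - m) (k + m) yv y r ∧ Oeq (k + m + 1) K ov y r)
      = ∏ j ∈ Finset.Icc k (k + m),
          cPr M.p (Req j j rv)
            (fun y r => Yeq (j - m) j yv y r ∧
              Oeq (j + 1) (j + m)
                (fun n => if k + m + 1 ≤ n then ov n
                  else if rv n then some (yv n) else none) y r) := by
  set y₀ : Fin K → Bool := fun j =>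
    if j.1 + 1 ≤ k + m then yv (j.1 + 1) else (ov (j.1 + 1)).getD false
  set r₀ : Fin K → Bool := fun j =>
    if j.1 + 1 ≤ k + m then rv (j.1 + 1) else (ov (j.1 + 1)).isSome
  have hobs : ∀ j : Fin K, obs y₀ r₀ j = if k + m + 1 ≤ j.1 + 1 then ov (j.1 + 1)
      else if rv (j.1 + 1) then some (yv (j.1 + 1)) else none := fun j => by
    by_cases hj : j.1 + 1 ≤ k + m
    · simp only [obs, y₀, r₀, if_pos hj, if_neg (show ¬ k + m + 1 ≤ j.1 + 1 by omega)]
    · simp only [obs, y₀, r₀, if_neg hj, if_pos (show k + m + 1 ≤ j.1 + 1 by omega)]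
      cases ov (j.1 + 1) <;> rfl
  rw [M.cPr_Req_eq_prod_b (Nat.le_add_right k m) (min_le_right _ _) (y₀ := y₀) (r₀ := r₀)
      ⟨fun j _ hj => if_pos hj, fun j _ hj => if_pos hj, fun j hj _ => by rw [hobs, if_pos hj]⟩,
    Finset.prod_congr rfl fun j hj => M.cPr_Req_eq_prod_b le_rfl (min_le_left _ _)
      (y₀ := y₀) (r₀ := r₀) ⟨fun i _ hi => if_pos (hi.trans (mem_Icc.1 hj).2),
        fun i _ hi => if_pos (hi.trans (mem_Icc.1 hj).2), fun i _ _ => hobs i⟩]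
  rw [← Finset.prod_fiberwise_of_maps_to (g := fun i : Fin K => i.1 + 1)
    (fun i hi => (Finset.mem_filter.1 hi).2)]
  refine Finset.prod_congr rfl fun j hj => Finset.prod_congr ?_ fun _ _ => rfl
  ext i
  simp only [mem_filter, mem_univ, true_and, mem_Icc] at hj ⊢
  omega

/-- Block factorization of the middle response indicators.  Under the
`m`th-order Markov model, for every `m < k < K − m − 1` and all values of the variables,
`f(R̲^{m+1}_{k−1} | Ȳ^{2m+1}_{k+m+1}, O̲_{k+m}) = ∏_{j=k}^{k+m} f(Rⱼ | Ȳ^{m+1}_{j+1}, O̲ᵐⱼ)`,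
where the `O`-arguments in each factor are determined by the conditioning values
(`Oⱼ = ov j` for conditioned positions `j ≥ k + m + 1`, and `Oⱼ = (rv j, yv j)` for
positions in the block, determined by conditioned outcomes and the block `R`-values). -/
theorem statement13 (K m : ℕ) (hm : 1 ≤ m) (hKm : 2 * m + 1 < K) (M : Markov K m)
    (k : ℕ) (hk1 : m < k) (hk2 : k < K - m - 1)
    (yv : ℕ → Bool) (rv : ℕ → Bool) (ov : ℕ → Option Bool) :
    cPr M.p (Req k (k + m) rv)
        (fun y r => Yeq (k - m) (k + m) yv y r ∧ Oeq (k + m + 1) K ov y r)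
      = ∏ j ∈ Finset.Icc k (k + m),
          cPr M.p (Req j j rv)
            (fun y r => Yeq (j - m) j yv y r ∧
              Oeq (j + 1) (j + m)
                (fun n => if k + m + 1 ≤ n then ov n
                  else if rv n then some (yv n) else none) y r) :=
  statement13_general K m M k yv rv ov

end MRM
end

section
/- (Block factorization of the early response indicators.) Under the mth-order Markov model, for every integer k with m + 1 < k ≤ K − m − 1 and all values of the variables, f(R̄_{k−m} | Ȳ_{k−m}, Ōᵐₖ) = ∏_{j=1}^{k−m−1} f(Rⱼ | Ȳ^{m+1}_{j+1}, O̲ᵐⱼ), i.e., the conditional pmf of the block (R₁,…,R_{k−m−1}) given (Y₁,…,Y_{k−m−1}, O_{k−m},…,O_{k−1}) equals the product over j of the conditional pmfs of Rⱼ given (Y_{max(1,j−m)},…,Yⱼ, O_{j+1},…,O_{j+m}), where the O-arguments in each factor are determined by the conditioning values and the other R-entries in the block. -/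
/-!
Under the Markov factorization `p = ∏ₗ aₗ bₗ`, fix outcomes on a set containing the
positions `[d - m, c)` and the observed positions of `[c, c + m)`, and responses on `[d, c + m)`.
Then the factors `bₗ` with `d ≤ l < c` are constants, the factors with `l ≥ c` do not see the
responses before `c`, and the factors with `l < d` sum to one when the responses
`r₀, r₁, …, r_{d-1}` are summed out in turn (`bₗ` is a pmf in `rₗ` and no later factor looks at
`rₗ`). So the probability of such an event is `∏_{d ≤ l < c} bₗ` times a mass independent of
`d`, and the conditional probability of the responses on `[d', d)` is `∏_{d' ≤ l < d} bₗ`,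
evaluated at any point realizing the conditioning values. The left-hand side is the case
`d' = 0`, `d = c = k - m - 1`, and the `j`-th factor on the right is the case
`d' = j - 1`, `d = c = j`, both at the same point.
-/

open scoped Classical BigOperators

namespace MRM

section Cylinder

variable {ι α β : Type*} [Fintype ι] [DecidableEq ι] [Fintype α] [DecidableEq α]
  [AddCommMonoid β]

def cylinder (F : Finset ι) (x : ι → α) : Finset (ι → α) :=
  {r | ∀ i ∈ F, r i = x i}

@[simp]
lemma mem_cylinder {F : Finset ι} {x r : ι → α} : r ∈ cylinder F x ↔ ∀ i ∈ F, r i = x i := by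
  simp [cylinder]

lemma self_mem_cylinder (F : Finset ι) (x : ι → α) : x ∈ cylinder F x := by
  simp

lemma mem_cylinder_union {F G : Finset ι} {x r : ι → α} :
    r ∈ cylinder (F ∪ G) x ↔ r ∈ cylinder F x ∧ r ∈ cylinder G x := by
  simp only [mem_cylinder, Finset.mem_union]
  exact ⟨fun h => ⟨fun i hi => h i (.inl hi), fun i hi => h i (.inr hi)⟩,
    fun h i hi => hi.elim (h.1 i) (h.2 i)⟩

lemma cylinder_univ (x : ι → α) : cylinder Finset.univ x = {x} := by
  ext r
  simp [funext_iff]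

lemma sum_cylinder_inter {F G : Finset ι} (hFG : F ∪ G = Finset.univ) (x : ι → α)
    (f : (ι → α) → β) :
    ∑ r ∈ cylinder (F ∩ G) x, f r = ∑ r' ∈ cylinder F x, ∑ r ∈ cylinder G r', f r := by
  -- the outer point `r'` is recovered from `r` as `r` on `G` and `x` off `G`
  rw [Finset.sum_comm' (t' := cylinder (F ∩ G) x)
    (s' := fun r => {fun i => if i ∈ G then r i else x i})]
  · simp
  · intro r' r
    have hcover : ∀ i, i ∉ G → i ∈ F := fun i hi =>
      (Finset.mem_union.mp (hFG ▸ Finset.mem_univ i)).resolve_right hi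
    simp only [mem_cylinder, Finset.mem_inter, Finset.mem_singleton, funext_iff]
    constructor
    · rintro ⟨hr', hr⟩
      refine ⟨fun i => ?_, fun i hi => by rw [hr i hi.2, hr' i hi.1]⟩
      split_ifs with hi
      · exact (hr i hi).symm
      · exact hr' i (hcover i hi)
    · rintro ⟨hr', hr⟩
      refine ⟨fun i hi => ?_, fun i hi => by rw [hr' i, if_pos hi]⟩
      rw [hr' i]
      split_ifs with hG
      · exact hr i ⟨hi, hG⟩
      · rfl

lemma sum_cylinder_compl_singleton (i : ι) (x : ι → α) (f : (ι → α) → β) :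
    ∑ r ∈ cylinder {i}ᶜ x, f r = ∑ v : α, f (Function.update x i v) := by
  have himage : cylinder {i}ᶜ x = Finset.univ.image (Function.update x i) := by
    ext r
    simp only [mem_cylinder, Finset.mem_compl, Finset.mem_singleton, Finset.mem_image,
      Finset.mem_univ, true_and]
    constructor
    · intro h
      refine ⟨r i, funext fun j => ?_⟩
      by_cases hj : j = i
      · subst hj; simp
      · rw [Function.update_of_ne hj, h j hj]
    · rintro ⟨v, rfl⟩ j hj
      exact Function.update_of_ne hj _ _
  rw [himage, Finset.sum_image]
  intro v _ w _ h
  simpa using congrFun h i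

end Cylinder

section Window

variable {K : ℕ}

/-- The 0-based positions `a ≤ i < b`; the paper's 1-based window `lo, …, hi` is
`window (lo - 1) hi`. -/
def window (a b : ℕ) : Finset (Fin K) := {i | a ≤ i.1 ∧ i.1 < b}

@[simp]
lemma mem_window {a b : ℕ} {i : Fin K} : i ∈ window a b ↔ a ≤ i.1 ∧ i.1 < b := by
  simp [window]

lemma window_union_window {a b c : ℕ} (hab : a ≤ b) (hbc : b ≤ c) :
    (window a b ∪ window b c : Finset (Fin K)) = window a c := by
  ext i
  simp only [Finset.mem_union, mem_window]
  omega

lemma prod_window_mul_prod_window {β : Type*} [CommMonoid β] {a b c : ℕ} (hab : a ≤ b)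
    (hbc : b ≤ c) (f : Fin K → β) :
    (∏ l ∈ window a b, f l) * ∏ l ∈ window b c, f l = ∏ l ∈ window a c, f l := by
  rw [← window_union_window hab hbc, Finset.prod_union]
  rw [Finset.disjoint_left]
  intro i
  simp only [mem_window]
  omega

end Window

section Events

variable {K lo hi : ℕ} {Y R y r : Fin K → Bool}

lemma Pr_eq_sum_cylinder (p : (Fin K → Bool) → (Fin K → Bool) → ℝ)
    {E : (Fin K → Bool) → (Fin K → Bool) → Prop} {Fy Fr : Finset (Fin K)}
    (hE : ∀ y r, E y r ↔ y ∈ cylinder Fy Y ∧ r ∈ cylinder Fr R) :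
    Pr p E = ∑ y ∈ cylinder Fy Y, ∑ r ∈ cylinder Fr R, p y r := by
  simp only [Pr, hE, ite_and, Finset.sum_ite_irrel, Finset.sum_const_zero, Finset.sum_ite_mem,
    Finset.univ_inter]

lemma obs_eq_obs_iff (i : Fin K) :
    obs y r i = obs Y R i ↔ r i = R i ∧ (R i = true → y i = Y i) := by
  unfold obs
  cases r i <;> cases R i <;> simp

lemma Yeq_iff {yv : ℕ → Bool} (hY : ∀ i ∈ window (lo - 1) hi, Y i = yv (i.1 + 1)) :
    Yeq lo hi yv y r ↔ y ∈ cylinder (window (lo - 1) hi) Y := by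
  simp only [Yeq, mem_cylinder]
  refine ⟨fun h i hi => ?_, fun h i h1 h2 => ?_⟩
  · rw [hY i hi]; rw [mem_window] at hi; exact h i (by omega) (by omega)
  · have hi : i ∈ window (lo - 1) hi := mem_window.mpr ⟨by omega, by omega⟩
    rw [h i hi, hY i hi]

lemma Req_iff {rv : ℕ → Bool} (hR : ∀ i ∈ window (lo - 1) hi, R i = rv (i.1 + 1)) :
    Req lo hi rv y r ↔ r ∈ cylinder (window (lo - 1) hi) R := by
  simp only [Req, mem_cylinder]
  refine ⟨fun h i hi => ?_, fun h i h1 h2 => ?_⟩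
  · rw [hR i hi]; rw [mem_window] at hi; exact h i (by omega) (by omega)
  · have hi : i ∈ window (lo - 1) hi := mem_window.mpr ⟨by omega, by omega⟩
    rw [h i hi, hR i hi]

lemma Oeq_iff {ov : ℕ → Option Bool}
    (hO : ∀ i ∈ window (lo - 1) hi, obs Y R i = ov (i.1 + 1)) :
    Oeq lo hi ov y r ↔
      y ∈ cylinder {i ∈ window (lo - 1) hi | R i} Y ∧ r ∈ cylinder (window (lo - 1) hi) R := by
  have hobs : Oeq lo hi ov y r ↔ ∀ i ∈ window (lo - 1) hi, obs y r i = obs Y R i := by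
    simp only [Oeq]
    refine ⟨fun h i hi => ?_, fun h i h1 h2 => ?_⟩
    · rw [hO i hi]; rw [mem_window] at hi; exact h i (by omega) (by omega)
    · have hi : i ∈ window (lo - 1) hi := mem_window.mpr ⟨by omega, by omega⟩
      rw [h i hi, hO i hi]
  simp only [hobs, obs_eq_obs_iff, mem_cylinder, Finset.mem_filter]
  exact ⟨fun h => ⟨fun i hi => (h i hi.1).2 hi.2, fun i hi => (h i hi).1⟩,
    fun h i hi => ⟨h.2 i hi, fun hR => h.1 i ⟨hi, hR⟩⟩⟩

end Events

section Witness

/-- Unobserved outcomes after the block get the arbitrary value `false`: no event below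
looks at them. -/
def witnessY {K : ℕ} (k m : ℕ) (yv : ℕ → Bool) (ov : ℕ → Option Bool) : Fin K → Bool :=
  fun i => if i.1 + 1 < k - m then yv (i.1 + 1) else (ov (i.1 + 1)).getD false

def witnessR {K : ℕ} (k m : ℕ) (rv : ℕ → Bool) (ov : ℕ → Option Bool) : Fin K → Bool :=
  fun i => if i.1 + 1 < k - m then rv (i.1 + 1) else (ov (i.1 + 1)).isSome

variable {K k m : ℕ} (yv rv : ℕ → Bool) (ov : ℕ → Option Bool)

lemma witnessY_of_lt {i : Fin K} (h : i.1 + 1 < k - m) : witnessY k m yv ov i = yv (i.1 + 1) :=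
  if_pos h

lemma witnessR_of_lt {i : Fin K} (h : i.1 + 1 < k - m) : witnessR k m rv ov i = rv (i.1 + 1) :=
  if_pos h

lemma obs_witness (i : Fin K) :
    obs (witnessY k m yv ov) (witnessR k m rv ov) i =
      if k - m ≤ i.1 + 1 then ov (i.1 + 1)
      else if rv (i.1 + 1) then some (yv (i.1 + 1)) else none := by
  unfold obs witnessY witnessR
  by_cases h : i.1 + 1 < k - m
  · simp [h, not_le.mpr h]
  · rw [if_neg h, if_neg h, if_pos (not_lt.mp h)]
    cases ov (i.1 + 1) <;> simp

end Witness

namespace Markov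

variable {K m : ℕ} (M : Markov K m)

lemma b_eq_of_eqOn_ge {l : Fin K} {y r r' : Fin K → Bool} (h : ∀ i, l ≤ i → r i = r' i) :
    M.b l y r = M.b l y r' :=
  M.b_local l y r y r' (h l le_rfl) (fun _ _ _ => rfl) fun j hj _ => by
    unfold obs; rw [h j hj.le]

lemma sum_cylinder_prod_b_eq_one (y : Fin K → Bool) :
    ∀ d ≤ K, ∀ x : Fin K → Bool,
      ∑ r ∈ cylinder (window d K) x, ∏ l ∈ window 0 d, M.b l y r = 1
  | 0, _, x => by simp [cylinder_univ, window]
  | d + 1, hd, x => by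
    set i₀ : Fin K := ⟨d, hd⟩
    have hinter : (window (d + 1) K : Finset (Fin K)) = {i₀}ᶜ ∩ window d K := by
      ext i; simp [i₀, Fin.ext_iff, i.2]; omega
    have hcover : {i₀}ᶜ ∪ window d K = Finset.univ := by
      ext i; simp [i₀, Fin.ext_iff, i.2]; omega
    have hsplit : window 0 (d + 1) = insert i₀ (window 0 d) := by
      ext i; simp [i₀, Fin.ext_iff]; omega
    have hi₀ : i₀ ∉ window 0 d := by simp [i₀]
    rw [hinter, sum_cylinder_inter hcover]
    calc ∑ r' ∈ cylinder {i₀}ᶜ x, ∑ r ∈ cylinder (window d K) r',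
          ∏ l ∈ window 0 (d + 1), M.b l y r
        = ∑ r' ∈ cylinder {i₀}ᶜ x, M.b i₀ y r' := by
          refine Finset.sum_congr rfl fun r' _ => ?_
          have hlast : ∀ r ∈ cylinder (window d K) r', M.b i₀ y r = M.b i₀ y r' := fun r hr =>
            M.b_eq_of_eqOn_ge fun i hi =>
              (mem_cylinder.mp hr) i (by simpa [i₀, Fin.le_def] using hi)
          rw [Finset.sum_congr rfl fun r hr => by rw [hsplit, Finset.prod_insert hi₀, hlast r hr],
            ← Finset.mul_sum, sum_cylinder_prod_b_eq_one y d (by omega) r', mul_one]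
      _ = 1 := by rw [sum_cylinder_compl_singleton, M.b_pmf]

variable {Fy : Finset (Fin K)} {Y R : Fin K → Bool} {d c : ℕ}

/-- Every argument of `b l` is pinned: responses in `[l, l + m]`, outcomes in `[l - m, l]`, and
outcomes at later observed positions. -/
lemma b_eq_of_mem_cylinder (hFy_lt : ∀ i : Fin K, d ≤ i.1 + m → i.1 < c → i ∈ Fy)
    (hFy_obs : ∀ i : Fin K, c ≤ i.1 → i.1 < c + m → R i = true → i ∈ Fy)
    {y r : Fin K → Bool} (hy : y ∈ cylinder Fy Y) (hr : r ∈ cylinder (window d (c + m)) R)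
    {l : Fin K} (hl : l ∈ window d c) : M.b l y r = M.b l Y R := by
  rw [mem_cylinder] at hy hr
  rw [mem_window] at hl
  have hrR : ∀ i : Fin K, d ≤ i.1 → i.1 < c + m → r i = R i := fun i h1 h2 =>
    hr i (mem_window.mpr ⟨h1, h2⟩)
  refine M.b_local l y r Y R (hrR l hl.1 (by omega))
    (fun i h1 h2 => hy i (hFy_lt i (by omega) (by omega))) fun i h1 h2 => ?_
  unfold obs
  rw [hrR i (by omega) (by omega)]
  split_ifs with hRi
  · by_cases hic : i.1 < c
    · rw [hy i (hFy_lt i (by omega) hic)]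
    · rw [hy i (hFy_obs i (by omega) (by omega) hRi)]
  · rfl

noncomputable def tailMass (Fy : Finset (Fin K)) (Y R : Fin K → Bool) (c : ℕ) : ℝ :=
  ∑ y ∈ cylinder Fy Y, (∏ l, M.a l y) *
    ∑ r ∈ cylinder (window 0 (c + m)) R, ∏ l ∈ window c K, M.b l y r

lemma tailMass_pos : 0 < M.tailMass Fy Y R c :=
  Finset.sum_pos (fun y _ => mul_pos (Finset.prod_pos fun l _ => M.a_pos l y)
      (Finset.sum_pos (fun r _ => Finset.prod_pos fun l _ => M.b_pos l y r)
        ⟨R, self_mem_cylinder _ R⟩))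
    ⟨Y, self_mem_cylinder _ Y⟩

lemma sum_cylinder_p_eq_prod_b_mul_tailMass (hdc : d ≤ c) (hcK : c ≤ K)
    (hFy_lt : ∀ i : Fin K, d ≤ i.1 + m → i.1 < c → i ∈ Fy)
    (hFy_obs : ∀ i : Fin K, c ≤ i.1 → i.1 < c + m → R i = true → i ∈ Fy) :
    ∑ y ∈ cylinder Fy Y, ∑ r ∈ cylinder (window d (c + m)) R, M.p y r
      = (∏ l ∈ window d c, M.b l Y R) * M.tailMass Fy Y R c := by
  have hinter : (window d (c + m) : Finset (Fin K)) = window 0 (c + m) ∩ window d K := by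
    ext i; simp [i.2]; omega
  have hcover : (window 0 (c + m) ∪ window d K : Finset (Fin K)) = Finset.univ := by
    ext i; simp [i.2]; omega
  rw [tailMass, Finset.mul_sum]
  refine Finset.sum_congr rfl fun y hy => ?_
  rw [hinter, sum_cylinder_inter hcover, mul_left_comm, Finset.mul_sum, Finset.mul_sum]
  refine Finset.sum_congr rfl fun r' hr' => ?_
  have hfactor : ∀ r ∈ cylinder (window d K) r', M.p y r
      = ((∏ l, M.a l y) * ((∏ l ∈ window d c, M.b l Y R) * ∏ l ∈ window c K, M.b l y r')) *
        ∏ l ∈ window 0 d, M.b l y r := by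
    intro r hr
    have hrR : r ∈ cylinder (window d (c + m)) R := mem_cylinder.mpr fun i hi => by
      rw [mem_window] at hi
      rw [(mem_cylinder.mp hr) i (by simp [hi.1, i.2]), (mem_cylinder.mp hr') i (by simp [hi.2])]
    have hmid : ∀ l ∈ window d c, M.b l y r = M.b l Y R :=
      fun l hl => M.b_eq_of_mem_cylinder hFy_lt hFy_obs hy hrR hl
    have htail : ∀ l ∈ window c K, M.b l y r = M.b l y r' := fun l hl =>
      M.b_eq_of_eqOn_ge fun i hi => (mem_cylinder.mp hr) i <| by
        simp only [mem_window, Fin.le_def] at hl hi ⊢; omega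
    have hsplit : ∏ l, M.b l y r = (∏ l ∈ window 0 d, M.b l y r) *
        (∏ l ∈ window d c, M.b l y r) * ∏ l ∈ window c K, M.b l y r := by
      have huniv : (Finset.univ : Finset (Fin K)) = window 0 K := by ext i; simp [i.2]
      rw [prod_window_mul_prod_window (Nat.zero_le d) hdc,
        prod_window_mul_prod_window (Nat.zero_le c) hcK, huniv]
    rw [M.factor, Finset.prod_mul_distrib, hsplit, Finset.prod_congr rfl hmid,
      Finset.prod_congr rfl htail]
    ring
  rw [Finset.sum_congr rfl hfactor, ← Finset.mul_sum,
    M.sum_cylinder_prod_b_eq_one y d (hdc.trans hcK) r', mul_one]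

theorem cPr_eq_prod_b {A C : (Fin K → Bool) → (Fin K → Bool) → Prop} {d' : ℕ}
    (hd' : d' ≤ d) (hdc : d ≤ c) (hcK : c ≤ K)
    (hFy_lt : ∀ i : Fin K, d' ≤ i.1 + m → i.1 < c → i ∈ Fy)
    (hFy_obs : ∀ i : Fin K, c ≤ i.1 → i.1 < c + m → R i = true → i ∈ Fy)
    (hAC : ∀ y r, A y r ∧ C y r ↔ y ∈ cylinder Fy Y ∧ r ∈ cylinder (window d' (c + m)) R)
    (hC : ∀ y r, C y r ↔ y ∈ cylinder Fy Y ∧ r ∈ cylinder (window d (c + m)) R) :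
    cPr M.p A C = ∏ l ∈ window d' d, M.b l Y R := by
  rw [cPr, Pr_eq_sum_cylinder _ hAC, Pr_eq_sum_cylinder _ hC,
    M.sum_cylinder_p_eq_prod_b_mul_tailMass (hd'.trans hdc) hcK hFy_lt hFy_obs,
    M.sum_cylinder_p_eq_prod_b_mul_tailMass hdc hcK (fun i h => hFy_lt i (by omega)) hFy_obs,
    ← prod_window_mul_prod_window hd' hdc, mul_assoc, mul_div_cancel_right₀]
  exact (mul_pos (Finset.prod_pos fun l _ => M.b_pos l Y R) M.tailMass_pos).ne'

variable {k : ℕ} (yv rv : ℕ → Bool) (ov : ℕ → Option Bool)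

theorem cPr_block_eq_prod_b (hk1 : m + 1 < k) (hkK : k - m - 1 ≤ K) :
    cPr M.p (Req 1 (k - m - 1) rv)
        (fun y r => Yeq 1 (k - m - 1) yv y r ∧ Oeq (k - m) (k - 1) ov y r)
      = ∏ l ∈ window 0 (k - m - 1), M.b l (witnessY k m yv ov) (witnessR k m rv ov) := by
  set Y : Fin K → Bool := witnessY k m yv ov
  set R : Fin K → Bool := witnessR k m rv ov
  have hkm : k - m - 1 + m = k - 1 := by omega
  have hY : ∀ i ∈ window (1 - 1) (k - m - 1), Y i = yv (i.1 + 1) := fun i hi =>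
    witnessY_of_lt yv ov (by rw [mem_window] at hi; omega)
  have hR : ∀ i ∈ window (1 - 1) (k - m - 1), R i = rv (i.1 + 1) := fun i hi =>
    witnessR_of_lt rv ov (by rw [mem_window] at hi; omega)
  have hO : ∀ i ∈ window (k - m - 1) (k - 1), obs Y R i = ov (i.1 + 1) := fun i hi => by
    rw [obs_witness, if_pos (by rw [mem_window] at hi; omega)]
  refine M.cPr_eq_prod_b (Fy := window 0 (k - m - 1) ∪ {i ∈ window (k - m - 1) (k - 1) | R i})
    (c := k - m - 1) (Nat.zero_le _) le_rfl hkK ?_ ?_ ?_ ?_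
  · intro i _ hi
    simp [hi]
  · intro i h1 h2 hRi
    simp only [Finset.mem_union, Finset.mem_filter, mem_window]
    exact .inr ⟨⟨h1, by omega⟩, hRi⟩
  · intro y r
    rw [Req_iff hR, Yeq_iff hY, Oeq_iff hO, Nat.sub_self, hkm, mem_cylinder_union,
      ← window_union_window (Nat.zero_le (k - m - 1)) (show k - m - 1 ≤ k - 1 by omega),
      mem_cylinder_union]
    simp only [and_assoc, and_left_comm, and_comm]
  · intro y r
    rw [Yeq_iff hY, Oeq_iff hO, Nat.sub_self, hkm, mem_cylinder_union, and_assoc]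

theorem cPr_single_eq_b {j : ℕ} (l : Fin K) (hl : l.1 + 1 = j) (hj : j < k - m) :
    cPr M.p (Req j j rv)
        (fun y r => Yeq (j - m) j yv y r ∧
          Oeq (j + 1) (j + m)
            (fun n => if k - m ≤ n then ov n else if rv n then some (yv n) else none) y r)
      = M.b l (witnessY k m yv ov) (witnessR k m rv ov) := by
  set Y : Fin K → Bool := witnessY k m yv ov
  set R : Fin K → Bool := witnessR k m rv ov
  have hY : ∀ i ∈ window (j - m - 1) j, Y i = yv (i.1 + 1) := fun i hi =>
    witnessY_of_lt yv ov (by rw [mem_window] at hi; omega)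
  have hR : ∀ i ∈ window (j - 1) j, R i = rv (i.1 + 1) := fun i hi =>
    witnessR_of_lt rv ov (by rw [mem_window] at hi; omega)
  have hO : ∀ i ∈ window (j + 1 - 1) (j + m), obs Y R i =
      (fun n => if k - m ≤ n then ov n else if rv n then some (yv n) else none) (i.1 + 1) :=
    fun i _ => obs_witness yv rv ov i
  have hwin : window (j - 1) j = {l} := by
    ext i; simp [Fin.ext_iff]; omega
  rw [← Finset.prod_singleton (M.b · Y R) l, ← hwin]
  refine M.cPr_eq_prod_b (Fy := window (j - m - 1) j ∪ {i ∈ window j (j + m) | R i})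
    (c := j) (Nat.sub_le _ _) le_rfl (hl ▸ l.2) ?_ ?_ ?_ ?_
  · intro i h1 h2
    simp only [Finset.mem_union, Finset.mem_filter, mem_window]
    omega
  · intro i h1 h2 hRi
    simp only [Finset.mem_union, Finset.mem_filter, mem_window]
    exact .inr ⟨⟨h1, h2⟩, hRi⟩
  · intro y r
    rw [Req_iff hR, Yeq_iff hY, Oeq_iff hO, Nat.add_sub_cancel, mem_cylinder_union,
      ← window_union_window (Nat.sub_le j 1) (Nat.le_add_right j m), mem_cylinder_union]
    simp only [and_assoc, and_left_comm, and_comm]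
  · intro y r
    rw [Yeq_iff hY, Oeq_iff hO, Nat.add_sub_cancel, mem_cylinder_union, and_assoc]

end Markov

theorem statement14_general (K m : ℕ) (M : Markov K m)
    (k : ℕ) (hk1 : m + 1 < k) (hk2 : k ≤ K - m - 1)
    (yv : ℕ → Bool) (rv : ℕ → Bool) (ov : ℕ → Option Bool) :
    cPr M.p (Req 1 (k - m - 1) rv)
        (fun y r => Yeq 1 (k - m - 1) yv y r ∧ Oeq (k - m) (k - 1) ov y r)
      = ∏ j ∈ Finset.Icc 1 (k - m - 1),
          cPr M.p (Req j j rv)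
            (fun y r => Yeq (j - m) j yv y r ∧
              Oeq (j + 1) (j + m)
                (fun n => if k - m ≤ n then ov n
                  else if rv n then some (yv n) else none) y r) := by
  rw [M.cPr_block_eq_prod_b yv rv ov hk1 (by omega)]
  refine Finset.prod_nbij (fun l => l.1 + 1) ?_ ?_ ?_ ?_
  · intro l hl
    simp only [mem_window, Finset.mem_Icc] at hl ⊢
    omega
  · intro l₁ _ l₂ _ h
    exact Fin.ext (by simpa using h)
  · intro j hj
    simp only [Finset.coe_Icc, Set.mem_Icc] at hj
    exact ⟨⟨j - 1, by omega⟩, by simp; omega, by simp; omega⟩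
  · intro l hl
    rw [mem_window] at hl
    exact (M.cPr_single_eq_b yv rv ov l rfl (by omega)).symm

/-- Block factorization of the early response indicators.  Under the
`m`th-order Markov model, for every `m + 1 < k ≤ K − m − 1` and all values of the variables,
`f(R̄_{k−m} | Ȳ_{k−m}, Ōᵐₖ) = ∏_{j=1}^{k−m−1} f(Rⱼ | Ȳ^{m+1}_{j+1}, O̲ᵐⱼ)`,
where the `O`-arguments in each factor are determined by the conditioning values
(`Oⱼ = ov j` for conditioned positions `k − m ≤ j ≤ k − 1`, and `Oⱼ = (rv j, yv j)` for
positions in the block, determined by conditioned outcomes and the block `R`-values). -/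
theorem statement14 (K m : ℕ) (hm : 1 ≤ m) (hKm : 2 * m + 1 < K) (M : Markov K m)
    (k : ℕ) (hk1 : m + 1 < k) (hk2 : k ≤ K - m - 1)
    (yv : ℕ → Bool) (rv : ℕ → Bool) (ov : ℕ → Option Bool) :
    cPr M.p (Req 1 (k - m - 1) rv)
        (fun y r => Yeq 1 (k - m - 1) yv y r ∧ Oeq (k - m) (k - 1) ov y r)
      = ∏ j ∈ Finset.Icc 1 (k - m - 1),
          cPr M.p (Req j j rv)
            (fun y r => Yeq (j - m) j yv y r ∧
              Oeq (j + 1) (j + m)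
                (fun n => if k - m ≤ n then ov n
                  else if rv n then some (yv n) else none) y r) :=
  statement14_general K m M k hk1 hk2 yv rv ov

end MRM
end
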